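/- arXiv:2211.03120 — 4 statements merged into one kernel-verified Lean document; each statement's English description precedes it below -/
import Mathlib

section
/- Let G be a finite group and H a subgroup of G. If some Sylow 2-subgroup of H is a perfect code of G, then H is a perfect code of G. -/
/-- A subgroup `H` of a group `G` is a *perfect code* of `G` if `H` admits an
inverse-closed left transversal in `G`, i.e. there is a set `T ⊆ G` with
`T⁻¹ = T` such that every element of `G` lies in exactly one left coset `tH`, `t ∈ T`. -/
def IsPerfectCode {G : Type*} [Group G] (H : Subgroup G) : Prop :=
  ∃ T : Set G, T⁻¹ = T ∧ ∀ g : G, ∃! t : G, t ∈ T ∧ t⁻¹ * g ∈ H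

namespace PCAux


variable {G : Type*} [Group G]

/-- `z` lies in the double coset `K x K`. -/
def sameD (K : Subgroup G) (x z : G) : Prop := ∃ a ∈ K, ∃ b ∈ K, z = a * x * b

variable {K : Subgroup G}

lemma sameD_refl (x : G) : sameD K x x := ⟨1, one_mem K, 1, one_mem K, by group⟩

lemma sameD_symm {x z : G} (h : sameD K x z) : sameD K z x := by
  obtain ⟨a, ha, b, hb, rfl⟩ := h
  exact ⟨a⁻¹, inv_mem ha, b⁻¹, inv_mem hb, by group⟩

lemma sameD_trans {x z w : G} (h : sameD K x z) (h' : sameD K z w) : sameD K x w := by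
  obtain ⟨a, ha, b, hb, rfl⟩ := h
  obtain ⟨c, hc, d, hd, rfl⟩ := h'
  exact ⟨c * a, mul_mem hc ha, b * d, mul_mem hb hd, by group⟩

lemma sameD_inv {x z : G} (h : sameD K x z) : sameD K x⁻¹ z⁻¹ := by
  obtain ⟨a, ha, b, hb, rfl⟩ := h
  exact ⟨b⁻¹, inv_mem hb, a⁻¹, inv_mem ha, by group⟩

lemma sameD_mul_right {x z b : G} (h : sameD K x z) (hb : b ∈ K) : sameD K x (z * b) := by
  obtain ⟨a, ha, c, hc, rfl⟩ := h
  exact ⟨a, ha, c * b, mul_mem hc hb, by group⟩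

lemma sameD_mono {Q H : Subgroup G} (hQH : Q ≤ H) {x z : G} (h : sameD Q x z) : sameD H x z := by
  obtain ⟨a, ha, b, hb, rfl⟩ := h
  exact ⟨a, hQH ha, b, hQH hb, rfl⟩

lemma sameD_of_mk_eq {z z' : G} (h : (QuotientGroup.mk z : G ⧸ K) = QuotientGroup.mk z') :
    sameD K z z' := by
  have : z⁻¹ * z' ∈ K := QuotientGroup.eq.mp h
  exact ⟨1, one_mem K, z⁻¹ * z', this, by group⟩

/-- The left coset `C` is contained in the double coset `K x K`. -/
def inD (K : Subgroup G) (x : G) (C : G ⧸ K) : Prop :=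
  ∃ z, QuotientGroup.mk z = C ∧ sameD K x z

/-- The set of left cosets contained in the double coset `K x K`. -/
def OD (K : Subgroup G) (x : G) : Set (G ⧸ K) := {C | inD K x C}

lemma inD_mk {x z : G} : inD K x (QuotientGroup.mk z) ↔ sameD K x z := by
  constructor
  · rintro ⟨z', hz', hs⟩
    exact sameD_trans hs (sameD_of_mk_eq hz')
  · intro h
    exact ⟨z, rfl, h⟩

lemma mem_OD {x : G} {C : G ⧸ K} : C ∈ OD K x ↔ inD K x C := Iff.rfl

lemma mk_mem_OD_self (x : G) : (QuotientGroup.mk x : G ⧸ K) ∈ OD K x :=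
  ⟨x, rfl, sameD_refl x⟩

lemma sameD_of_inD_inD {x z : G} {C : G ⧸ K} (h : inD K x C) (h' : inD K z C) :
    sameD K x z := by
  obtain ⟨u, hu, hxu⟩ := h
  obtain ⟨v, hv, hzv⟩ := h'
  exact sameD_trans hxu (sameD_trans (sameD_of_mk_eq (hu.trans hv.symm)) (sameD_symm hzv))

lemma OD_eq_of_sameD {x z : G} (h : sameD K x z) : OD K x = OD K z := by
  ext C
  constructor
  · rintro ⟨u, hu, hs⟩; exact ⟨u, hu, sameD_trans (sameD_symm h) hs⟩
  · rintro ⟨u, hu, hs⟩; exact ⟨u, hu, sameD_trans h hs⟩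

lemma inD_out {x : G} {C : G ⧸ K} (h : inD K x C) : sameD K x C.out := by
  obtain ⟨z, hz, hs⟩ := h
  exact sameD_trans hs (sameD_of_mk_eq (by rw [hz, QuotientGroup.out_eq']))

/-- The key criterion: every self-paired double coset covering an odd number of left
cosets contains an element of order at most 2. -/
def CritProp (K : Subgroup G) : Prop :=
  ∀ x : G, sameD K x x⁻¹ → Odd (OD K x).ncard → ∃ w : G, w * w = 1 ∧ sameD K x w


variable {G : Type*} [Group G] {K : Subgroup G}


lemma OD_eq_orbit (x : G) :
    OD K x = MulAction.orbit (↥K) (QuotientGroup.mk x : G ⧸ K) := by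
  ext C
  constructor
  · rintro ⟨z, rfl, a, ha, b, hb, rfl⟩
    refine ⟨⟨a, ha⟩, ?_⟩
    show QuotientGroup.mk (a * x) = QuotientGroup.mk (a * x * b)
    refine QuotientGroup.eq.mpr ?_
    have h : (a * x)⁻¹ * (a * x * b) = b := by group
    rw [h]; exact hb
  · rintro ⟨⟨a, ha⟩, rfl⟩
    exact ⟨a * x, rfl, a, ha, 1, one_mem K, by group⟩

/-- membership in stabilizer of `⟦x⟧`. -/
lemma mem_stab_iff {x : G} (k : ↥K) :
    k ∈ MulAction.stabilizer (↥K) (QuotientGroup.mk x : G ⧸ K) ↔ x⁻¹ * (k : G) * x ∈ K := by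
  have : (k • (QuotientGroup.mk x : G ⧸ K)) = QuotientGroup.mk ((k : G) * x) := rfl
  rw [MulAction.mem_stabilizer_iff, this, QuotientGroup.eq]
  constructor
  · intro h; simpa [mul_assoc] using inv_mem h
  · intro h; simpa [mul_assoc] using inv_mem h

/-- conjugation equivalence between the two stabilizers. -/
noncomputable def stabEquiv (x : G) :
    (MulAction.stabilizer (↥K) (QuotientGroup.mk x : G ⧸ K)) ≃
      (MulAction.stabilizer (↥K) (QuotientGroup.mk x⁻¹ : G ⧸ K)) where
  toFun := fun ⟨k, hk⟩ =>
    ⟨⟨x⁻¹ * (k : G) * x, (mem_stab_iff k).mp hk⟩, by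
      rw [mem_stab_iff]
      simpa [mul_assoc] using k.2⟩
  invFun := fun ⟨q, hq⟩ =>
    ⟨⟨x * (q : G) * x⁻¹, by simpa [mul_assoc] using (mem_stab_iff q).mp hq⟩, by
      rw [mem_stab_iff]
      simpa [mul_assoc] using q.2⟩
  left_inv := fun ⟨k, hk⟩ => by
    ext
    simp [mul_assoc]
  right_inv := fun ⟨q, hq⟩ => by
    ext
    simp [mul_assoc]

lemma card_OD_inv [Finite G] (x : G) : (OD K x).ncard = (OD K x⁻¹).ncard := by
  rw [← Nat.card_coe_set_eq, ← Nat.card_coe_set_eq, OD_eq_orbit, OD_eq_orbit]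
  have e1 := Nat.card_congr
    (MulAction.orbitEquivQuotientStabilizer (↥K) (QuotientGroup.mk x : G ⧸ K))
  have e2 := Nat.card_congr
    (MulAction.orbitEquivQuotientStabilizer (↥K) (QuotientGroup.mk x⁻¹ : G ⧸ K))
  rw [e1, e2]
  have h1 := Subgroup.index_mul_card (MulAction.stabilizer (↥K) (QuotientGroup.mk x : G ⧸ K))
  have h2 := Subgroup.index_mul_card (MulAction.stabilizer (↥K) (QuotientGroup.mk x⁻¹ : G ⧸ K))
  have hcard : Nat.card (MulAction.stabilizer (↥K) (QuotientGroup.mk x : G ⧸ K))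
      = Nat.card (MulAction.stabilizer (↥K) (QuotientGroup.mk x⁻¹ : G ⧸ K)) :=
    Nat.card_congr (stabEquiv x)
  have hpos : 0 < Nat.card (MulAction.stabilizer (↥K) (QuotientGroup.mk x⁻¹ : G ⧸ K)) :=
    Nat.card_pos
  have : (MulAction.stabilizer (↥K) (QuotientGroup.mk x : G ⧸ K)).index
      = (MulAction.stabilizer (↥K) (QuotientGroup.mk x⁻¹ : G ⧸ K)).index := by
    rw [hcard] at h1
    have := h1.trans h2.symm
    exact Nat.eq_of_mul_eq_mul_right hpos this
  exact this



/-- An involution on a finite set of odd cardinality has a fixed point. -/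
lemma exists_fixed_of_odd {α : Type*} :
    ∀ n (S : Set α), S.Finite → S.ncard = n → ∀ f : α → α,
      (∀ a ∈ S, f a ∈ S) → (∀ a ∈ S, f (f a) = a) → Odd n → ∃ a ∈ S, f a = a := by
  intro n
  induction n using Nat.strong_induction_on with
  | _ n ih =>
    intro S hfin hcard f hmaps hinv hodd
    have hne : S.Nonempty := by
      rw [Set.nonempty_iff_ne_empty]
      rintro rfl
      rw [Set.ncard_empty] at hcard
      subst hcard
      exact (Nat.not_odd_iff_even.mpr Even.zero) hodd
    obtain ⟨a, ha⟩ := hne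
    by_cases hfa : f a = a
    · exact ⟨a, ha, hfa⟩
    · set S' := S \ {a, f a} with hS'
      have hfaS : f a ∈ S := hmaps a ha
      have hpair : ({a, f a} : Set α) ⊆ S := by
        intro u hu; rcases hu with rfl | rfl; exacts [ha, hfaS]
      have hpaircard : ({a, f a} : Set α).ncard = 2 := Set.ncard_pair (Ne.symm hfa)
      have hS'card : S'.ncard = n - 2 := by
        rw [hS', Set.ncard_diff hpair, hpaircard, hcard]
      have h2n : 2 ≤ n := by
          by_contra hc
          interval_cases n
          · exact (Nat.not_odd_iff_even.mpr Even.zero) hodd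
          · -- n = 1 : S = {a}, f a ∈ S so f a = a
            have := Set.ncard_eq_one.mp hcard
            obtain ⟨u, hu⟩ := this
            rw [hu] at ha hfaS
            simp at ha hfaS
            exact hfa (hfaS.trans ha.symm)
      have hlt : n - 2 < n := by omega
      have hmaps' : ∀ b ∈ S', f b ∈ S' := by
        rintro b ⟨hbS, hb⟩
        simp only [Set.mem_insert_iff, Set.mem_singleton_iff, not_or] at hb
        refine ⟨hmaps b hbS, ?_⟩
        simp only [Set.mem_insert_iff, Set.mem_singleton_iff, not_or]
        constructor
        · intro h
          exact hb.2 (by rw [← hinv b hbS, h])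
        · intro h
          have : f (f b) = f (f a) := by rw [h]
          rw [hinv b hbS, hinv a ha] at this
          exact hb.1 this
      have hinv' : ∀ b ∈ S', f (f b) = b := fun b hb => hinv b hb.1
      have hodd' : Odd (n - 2) := by
        rcases hodd with ⟨k, hk⟩
        exact ⟨k - 1, by omega⟩

      obtain ⟨b, hb, hfb⟩ := ih (n - 2) hlt S' (hfin.subset Set.diff_subset) hS'card f hmaps' hinv' hodd'
      exact ⟨b, hb.1, hfb⟩


variable {G : Type*} [Group G] {K : Subgroup G}




lemma necessity [Finite G] (h : IsPerfectCode K) : CritProp K := by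
  obtain ⟨T, hTinv, hT⟩ := h
  have hT' : ∀ C : G ⧸ K, ∃! t : G, t ∈ T ∧ QuotientGroup.mk t = C := by
    intro C
    obtain ⟨t, ⟨ht1, ht2⟩, ht3⟩ := hT C.out
    refine ⟨t, ⟨ht1, ?_⟩, ?_⟩
    · rw [← QuotientGroup.out_eq' C]
      exact (QuotientGroup.eq.mpr ht2).symm.symm
    · rintro y ⟨hy1, hy2⟩
      refine ht3 y ⟨hy1, ?_⟩
      rw [← QuotientGroup.out_eq' C] at hy2
      exact QuotientGroup.eq.mp hy2
  choose rep hrep huniq using hT'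
  have hmkrep : ∀ C : G ⧸ K, QuotientGroup.mk (rep C) = C := fun C => (hrep C).2
  have hrepT : ∀ C : G ⧸ K, rep C ∈ T := fun C => (hrep C).1
  have hinvT : ∀ t ∈ T, t⁻¹ ∈ T := by
    intro t ht
    rw [← hTinv]
    simpa using ht
  intro x hself hodd
  set f : G ⧸ K → G ⧸ K := fun C => QuotientGroup.mk (rep C)⁻¹ with hf
  have hsamerep : ∀ C ∈ OD K x, sameD K x (rep C) := by
    intro C hC
    obtain ⟨z, hz, hs⟩ := hC
    exact sameD_trans hs (sameD_of_mk_eq (hz.trans (hmkrep C).symm))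
  have hmaps : ∀ C ∈ OD K x, f C ∈ OD K x := by
    intro C hC
    show inD K x _
    rw [inD_mk]
    exact sameD_trans hself (sameD_inv (hsamerep C hC))
  have hrepf : ∀ C : G ⧸ K, rep (f C) = (rep C)⁻¹ := by
    intro C
    exact (huniq (f C) _ ⟨hinvT _ (hrepT C), rfl⟩).symm
  have hinvol : ∀ C ∈ OD K x, f (f C) = C := by
    intro C _
    show QuotientGroup.mk (rep (f C))⁻¹ = C
    rw [hrepf C, inv_inv, hmkrep]
  obtain ⟨C, hC, hfix⟩ := exists_fixed_of_odd (OD K x).ncard (OD K x)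
    (Set.toFinite _) rfl f hmaps hinvol hodd
  refine ⟨rep C, ?_, hsamerep C hC⟩
  have : (rep C)⁻¹ = rep C := huniq C _ ⟨hinvT _ (hrepT C), hfix⟩
  nth_rewrite 1 [← this]
  exact inv_mul_cancel (rep C)


variable {G : Type*} [Group G] {K : Subgroup G}



/- small set helpers -/
lemma inter_diff {V : Type*} (S O : Set V) (a : V) : (S \ {a}) ∩ O = (S ∩ O) \ {a} := by
  ext u
  simp only [Set.mem_inter_iff, Set.mem_diff, Set.mem_singleton_iff]
  tauto

lemma inter_diff_of_not_mem {V : Type*} (S O : Set V) (a : V) (ha : a ∉ O) :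
    (S \ {a}) ∩ O = S ∩ O := by
  ext u
  simp only [Set.mem_inter_iff, Set.mem_diff, Set.mem_singleton_iff]
  constructor
  · rintro ⟨⟨h1, _⟩, h2⟩; exact ⟨h1, h2⟩
  · rintro ⟨h1, h2⟩; exact ⟨⟨h1, fun he => ha (he ▸ h2)⟩, h2⟩

/-- Assembling a transversal after choosing an involution `w` for its own coset. -/
lemma step_single (S : Set (G ⧸ K)) (w : G) (hwS : QuotientGroup.mk w ∈ S) (hw : w⁻¹ = w)
    (T' : Set G) (h1 : ∀ t ∈ T', t⁻¹ ∈ T')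
    (h2 : ∀ t ∈ T', QuotientGroup.mk t ∈ S \ {QuotientGroup.mk w})
    (h3 : ∀ C ∈ S \ {QuotientGroup.mk w}, ∃! t : G, t ∈ T' ∧ QuotientGroup.mk t = C) :
    ∃ T : Set G, (∀ t ∈ T, t⁻¹ ∈ T) ∧ (∀ t ∈ T, QuotientGroup.mk t ∈ S) ∧
      ∀ C ∈ S, ∃! t : G, t ∈ T ∧ QuotientGroup.mk t = C := by
  refine ⟨insert w T', ?_, ?_, ?_⟩
  · intro t ht
    rcases Set.mem_insert_iff.mp ht with rfl | ht'
    · rw [hw]; exact Set.mem_insert _ _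
    · exact Set.mem_insert_of_mem _ (h1 t ht')
  · intro t ht
    rcases Set.mem_insert_iff.mp ht with rfl | ht'
    · exact hwS
    · exact (h2 t ht').1
  · intro C hC
    by_cases hCw : C = QuotientGroup.mk w
    · subst hCw
      refine ⟨w, ⟨Set.mem_insert _ _, rfl⟩, ?_⟩
      rintro y ⟨hy, hymk⟩
      rcases Set.mem_insert_iff.mp hy with rfl | hy'
      · rfl
      · exact absurd hymk (h2 y hy').2
    · obtain ⟨t, ⟨ht1, ht2⟩, ht3⟩ := h3 C ⟨hC, hCw⟩
      refine ⟨t, ⟨Set.mem_insert_of_mem _ ht1, ht2⟩, ?_⟩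
      rintro y ⟨hy, hymk⟩
      rcases Set.mem_insert_iff.mp hy with rfl | hy'
      · exact absurd hymk.symm hCw
      · exact ht3 y ⟨hy', hymk⟩

/-- Assembling a transversal after choosing a mutually inverse pair `y, y⁻¹`
for two distinct cosets. -/
lemma step_pair (S : Set (G ⧸ K)) (C₀ C' : G ⧸ K) (hne : C' ≠ C₀) (y : G)
    (hy : QuotientGroup.mk y = C₀) (hy' : QuotientGroup.mk y⁻¹ = C')
    (hC₀S : C₀ ∈ S) (hC'S : C' ∈ S)
    (T' : Set G) (h1 : ∀ t ∈ T', t⁻¹ ∈ T')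
    (h2 : ∀ t ∈ T', QuotientGroup.mk t ∈ (S \ {C₀}) \ {C'})
    (h3 : ∀ C ∈ (S \ {C₀}) \ {C'}, ∃! t : G, t ∈ T' ∧ QuotientGroup.mk t = C) :
    ∃ T : Set G, (∀ t ∈ T, t⁻¹ ∈ T) ∧ (∀ t ∈ T, QuotientGroup.mk t ∈ S) ∧
      ∀ C ∈ S, ∃! t : G, t ∈ T ∧ QuotientGroup.mk t = C := by
  refine ⟨insert y (insert y⁻¹ T'), ?_, ?_, ?_⟩
  · intro t ht
    rcases Set.mem_insert_iff.mp ht with rfl | ht'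
    · exact Set.mem_insert_of_mem _ (Set.mem_insert _ _)
    rcases Set.mem_insert_iff.mp ht' with rfl | ht''
    · rw [inv_inv]; exact Set.mem_insert _ _
    · exact Set.mem_insert_of_mem _ (Set.mem_insert_of_mem _ (h1 t ht''))
  · intro t ht
    rcases Set.mem_insert_iff.mp ht with rfl | ht'
    · rw [hy]; exact hC₀S
    rcases Set.mem_insert_iff.mp ht' with rfl | ht''
    · rw [hy']; exact hC'S
    · exact ((h2 t ht'').1).1
  · intro C hC
    by_cases hC0 : C = C₀
    · subst hC0
      refine ⟨y, ⟨Set.mem_insert _ _, hy⟩, ?_⟩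
      rintro u ⟨hu, humk⟩
      rcases Set.mem_insert_iff.mp hu with rfl | hu'
      · rfl
      rcases Set.mem_insert_iff.mp hu' with rfl | hu''
      · exact absurd (hy'.symm.trans humk) hne
      · exact absurd humk ((h2 u hu'').1).2
    by_cases hC1 : C = C'
    · subst hC1
      refine ⟨y⁻¹, ⟨Set.mem_insert_of_mem _ (Set.mem_insert _ _), hy'⟩, ?_⟩
      rintro u ⟨hu, humk⟩
      rcases Set.mem_insert_iff.mp hu with rfl | hu'
      · exact absurd (hy.symm.trans humk).symm hne
      rcases Set.mem_insert_iff.mp hu' with rfl | hu''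
      · rfl
      · exact absurd humk (h2 u hu'').2
    · obtain ⟨t, ⟨ht1, ht2⟩, ht3⟩ := h3 C ⟨⟨hC, hC0⟩, hC1⟩
      refine ⟨t, ⟨Set.mem_insert_of_mem _ (Set.mem_insert_of_mem _ ht1), ht2⟩, ?_⟩
      rintro u ⟨hu, humk⟩
      rcases Set.mem_insert_iff.mp hu with rfl | hu'
      · exact absurd (hy.symm.trans humk) (fun h => hC0 h.symm)
      rcases Set.mem_insert_iff.mp hu' with rfl | hu''
      · exact absurd (hy'.symm.trans humk) (fun h => hC1 h.symm)
      · exact ht3 u ⟨hu'', humk⟩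


variable {G : Type*} [Group G] {K : Subgroup G}



lemma suff_aux [Finite G] (K : Subgroup G) :
    ∀ n (S : Set (G ⧸ K)), S.ncard = n →
      (∀ x : G, (S ∩ OD K x).ncard = (S ∩ OD K x⁻¹).ncard) →
      (∀ x : G, sameD K x x⁻¹ → Odd (S ∩ OD K x).ncard →
        ∃ w : G, w * w = 1 ∧ QuotientGroup.mk w ∈ S ∧ sameD K x w) →
      ∃ T : Set G, (∀ t ∈ T, t⁻¹ ∈ T) ∧ (∀ t ∈ T, QuotientGroup.mk t ∈ S) ∧
        ∀ C ∈ S, ∃! t : G, t ∈ T ∧ QuotientGroup.mk t = C := by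
  intro n
  induction n using Nat.strong_induction_on with
  | _ n ih =>
  intro S hcard hbal hwit
  rcases Set.eq_empty_or_nonempty S with rfl | ⟨C₀, hC₀⟩
  · exact ⟨∅, by simp, by simp, by simp⟩
  have hmkx₀ : QuotientGroup.mk C₀.out = C₀ := QuotientGroup.out_eq' C₀
  set x₀ := C₀.out with hx₀def
  have hC₀O : C₀ ∈ OD K x₀ := by rw [← hmkx₀]; exact mk_mem_OD_self x₀
  -- generic facts
  have memOD_iff : ∀ (x : G) (C : G ⧸ K), C ∈ OD K x → ∀ z : G, C ∈ OD K z → sameD K x z :=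
    fun x C hx z hz => sameD_of_inD_inD hx hz
  by_cases hself : sameD K x₀ x₀⁻¹
  · -- self-paired double coset
    have hODeq : OD K x₀ = OD K x₀⁻¹ := OD_eq_of_sameD hself
    by_cases hodd : Odd ((S ∩ OD K x₀).ncard)
    · -- take an involution w for its own coset
      obtain ⟨w, hw1, hwS, hws⟩ := hwit x₀ hself hodd
      set Cw : G ⧸ K := QuotientGroup.mk w with hCw
      have hCwO : Cw ∈ OD K x₀ := inD_mk.mpr hws
      set S' := S \ {Cw} with hS'
      have hcard' : S'.ncard + 1 = n := by
        rw [hS', ← hcard]; exact Set.ncard_diff_singleton_add_one hwS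
      -- balance for S'
      have hbal' : ∀ x : G, (S' ∩ OD K x).ncard = (S' ∩ OD K x⁻¹).ncard := by
        intro x
        by_cases hx : Cw ∈ OD K x
        · have hsxx₀ : sameD K x x₀ := memOD_iff x Cw hx x₀ hCwO
          have hODx : OD K x = OD K x₀ := OD_eq_of_sameD hsxx₀
          have hODxinv : OD K x⁻¹ = OD K x₀ := by
            refine (OD_eq_of_sameD ?_).trans hODeq.symm
            exact sameD_inv hsxx₀
          rw [hODx, hODxinv]
        · have hx' : Cw ∉ OD K x⁻¹ := by
            intro hmem
            apply hx
            have : sameD K x⁻¹ x₀ := memOD_iff x⁻¹ Cw hmem x₀ hCwO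
            have : sameD K x x₀⁻¹ := by
              have := sameD_inv this
              rwa [inv_inv] at this
            have : sameD K x x₀ := sameD_trans this (sameD_symm hself)
            rw [OD_eq_of_sameD this]
            exact hCwO
          rw [hS', inter_diff_of_not_mem S _ Cw hx, inter_diff_of_not_mem S _ Cw hx']
          exact hbal x
      -- witness condition for S'
      have hwit' : ∀ x : G, sameD K x x⁻¹ → Odd ((S' ∩ OD K x).ncard) →
          ∃ w' : G, w' * w' = 1 ∧ QuotientGroup.mk w' ∈ S' ∧ sameD K x w' := by
        intro x hxs hodd'
        by_cases hx : Cw ∈ OD K x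
        · exfalso
          have hsxx₀ : sameD K x x₀ := memOD_iff x Cw hx x₀ hCwO
          have hODx : OD K x = OD K x₀ := OD_eq_of_sameD hsxx₀
          have hdrop : (S' ∩ OD K x).ncard + 1 = (S ∩ OD K x).ncard := by
            rw [hS', inter_diff S _ Cw]
            exact Set.ncard_diff_singleton_add_one ⟨hwS, hODx ▸ hCwO⟩
          rw [hODx] at hdrop
          rw [Nat.odd_iff] at hodd hodd'
          rw [hODx] at hodd'
          omega
        · have hsets : S' ∩ OD K x = S ∩ OD K x := by
            rw [hS']; exact inter_diff_of_not_mem S _ Cw hx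
          rw [hsets] at hodd'
          obtain ⟨w', h1, h2, h3⟩ := hwit x hxs hodd'
          refine ⟨w', h1, ⟨h2, ?_⟩, h3⟩
          intro hmem
          rw [Set.mem_singleton_iff] at hmem
          apply hx
          rw [← hmem]
          exact inD_mk.mpr h3
      obtain ⟨T', hT1, hT2, hT3⟩ := ih S'.ncard (by omega) S' rfl hbal' hwit'
      exact step_single S w hwS (inv_eq_of_mul_eq_one_right hw1) T' hT1 hT2 hT3
    · -- even case : pick a second coset in the same double coset
      have h1le : 1 ≤ (S ∩ OD K x₀).ncard := by
        have : (S ∩ OD K x₀).Nonempty := ⟨C₀, hC₀, hC₀O⟩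
        have := (Set.ncard_pos (Set.toFinite _)).mpr this
        omega
      have h2le : 1 < (S ∩ OD K x₀).ncard := by
        rcases Nat.lt_or_ge 1 ((S ∩ OD K x₀).ncard) with h | h
        · exact h
        · exfalso; apply hodd
          have : (S ∩ OD K x₀).ncard = 1 := le_antisymm h h1le
          rw [this]; exact odd_one
      obtain ⟨C', ⟨hC'S, hC'O⟩, hC'ne⟩ := Set.exists_ne_of_one_lt_ncard h2le C₀
      -- C' is in OD K x₀ = OD K x₀⁻¹, extract mutually inverse pair
      have hC'O' : C' ∈ OD K x₀⁻¹ := hODeq ▸ hC'O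
      obtain ⟨z, hzmk, a, haK, b, hbK, hzeq⟩ := hC'O'
      set y := x₀ * a⁻¹ with hydef
      have hmky : QuotientGroup.mk y = C₀ := by
        rw [← hmkx₀]
        refine QuotientGroup.eq.mpr ?_
        have : (x₀ * a⁻¹)⁻¹ * x₀ = a := by group
        rw [hydef, this]; exact haK
      have hmky' : QuotientGroup.mk y⁻¹ = C' := by
        rw [← hzmk]
        refine QuotientGroup.eq.mpr ?_
        have : (x₀ * a⁻¹)⁻¹⁻¹ * (a * x₀⁻¹ * b) = b := by group
        rw [hydef, hzeq, this]; exact hbK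
      set S' := (S \ {C₀}) \ {C'} with hS'
      have hcard1 : (S \ {C₀}).ncard + 1 = n := by
        rw [← hcard]; exact Set.ncard_diff_singleton_add_one hC₀
      have hcard' : S'.ncard + 2 = n := by
        have : S'.ncard + 1 = (S \ {C₀}).ncard :=
          Set.ncard_diff_singleton_add_one ⟨hC'S, hC'ne⟩
        omega
      have hbal' : ∀ x : G, (S' ∩ OD K x).ncard = (S' ∩ OD K x⁻¹).ncard := by
        intro x
        by_cases hx : C₀ ∈ OD K x
        · have hsxx₀ : sameD K x x₀ := memOD_iff x C₀ hx x₀ hC₀O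
          have hODx : OD K x = OD K x₀ := OD_eq_of_sameD hsxx₀
          have hODxinv : OD K x⁻¹ = OD K x₀ := by
            refine (OD_eq_of_sameD ?_).trans hODeq.symm
            exact sameD_inv hsxx₀
          rw [hODx, hODxinv]
        · have hxC' : C' ∉ OD K x := by
            intro hmem
            exact hx ((OD_eq_of_sameD (memOD_iff x C' hmem x₀ hC'O)) ▸ hC₀O)
          have hxinv : C₀ ∉ OD K x⁻¹ := by
            intro hmem
            apply hx
            have h1 : sameD K x⁻¹ x₀ := memOD_iff x⁻¹ C₀ hmem x₀ hC₀O
            have h2 : sameD K x x₀⁻¹ := by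
              have := sameD_inv h1; rwa [inv_inv] at this
            have h3 : sameD K x x₀ := sameD_trans h2 (sameD_symm hself)
            exact (OD_eq_of_sameD h3) ▸ hC₀O
          have hxinvC' : C' ∉ OD K x⁻¹ := by
            intro hmem
            exact hxinv ((OD_eq_of_sameD (memOD_iff x⁻¹ C' hmem x₀ hC'O)) ▸ hC₀O)
          rw [hS', inter_diff_of_not_mem _ _ C' hxC', inter_diff_of_not_mem S _ C₀ hx,
            inter_diff_of_not_mem _ _ C' hxinvC', inter_diff_of_not_mem S _ C₀ hxinv]
          exact hbal x
      have hwit' : ∀ x : G, sameD K x x⁻¹ → Odd ((S' ∩ OD K x).ncard) →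
          ∃ w' : G, w' * w' = 1 ∧ QuotientGroup.mk w' ∈ S' ∧ sameD K x w' := by
        intro x hxs hodd'
        by_cases hx : C₀ ∈ OD K x
        · exfalso
          have hsxx₀ : sameD K x x₀ := memOD_iff x C₀ hx x₀ hC₀O
          have hODx : OD K x = OD K x₀ := OD_eq_of_sameD hsxx₀
          have hd1 : ((S \ {C₀}) ∩ OD K x₀).ncard + 1 = (S ∩ OD K x₀).ncard := by
            rw [inter_diff S _ C₀]
            exact Set.ncard_diff_singleton_add_one ⟨hC₀, hC₀O⟩
          have hd2 : (S' ∩ OD K x₀).ncard + 1 = ((S \ {C₀}) ∩ OD K x₀).ncard := by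
            rw [hS', inter_diff _ _ C']
            exact Set.ncard_diff_singleton_add_one ⟨⟨hC'S, hC'ne⟩, hC'O⟩
          rw [hODx] at hodd'
          rw [Nat.odd_iff] at hodd'
          have : ¬ Odd ((S ∩ OD K x₀).ncard) := hodd
          rw [Nat.odd_iff] at this
          omega
        · have hxC' : C' ∉ OD K x := by
            intro hmem
            exact hx ((OD_eq_of_sameD (memOD_iff x C' hmem x₀ hC'O)) ▸ hC₀O)
          have hsets : S' ∩ OD K x = S ∩ OD K x := by
            rw [hS', inter_diff_of_not_mem _ _ C' hxC', inter_diff_of_not_mem S _ C₀ hx]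
          rw [hsets] at hodd'
          obtain ⟨w', h1, h2, h3⟩ := hwit x hxs hodd'
          have hw'O : QuotientGroup.mk w' ∈ OD K x := inD_mk.mpr h3
          refine ⟨w', h1, ⟨⟨h2, ?_⟩, ?_⟩, h3⟩
          · intro hmem
            rw [Set.mem_singleton_iff] at hmem
            exact hx (hmem ▸ hw'O)
          · intro hmem
            rw [Set.mem_singleton_iff] at hmem
            exact hxC' (hmem ▸ hw'O)
      obtain ⟨T', hT1, hT2, hT3⟩ := ih S'.ncard (by omega) S' rfl hbal' hwit'
      exact step_pair S C₀ C' hC'ne y hmky hmky' hC₀ hC'S T' hT1 hT2 hT3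
  · -- non self-paired double coset
    have h1le : (S ∩ OD K x₀).ncard ≠ 0 := by
      have : (S ∩ OD K x₀).Nonempty := ⟨C₀, hC₀, hC₀O⟩
      have := (Set.ncard_pos (Set.toFinite _)).mpr this
      omega
    have hne' : (S ∩ OD K x₀⁻¹).Nonempty := by
      apply Set.nonempty_of_ncard_ne_zero
      rw [← hbal x₀]
      exact h1le
    obtain ⟨C', hC'mem⟩ := hne'
    have hC'S : C' ∈ S := hC'mem.1
    have hC'O : C' ∈ OD K x₀⁻¹ := hC'mem.2
    have hC'ne : C' ≠ C₀ := fun h => hself (memOD_iff x₀ C₀ hC₀O x₀⁻¹ (h ▸ hC'O))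
    obtain ⟨z, hzmk, a, haK, b, hbK, hzeq⟩ := hC'mem.2
    set y := x₀ * a⁻¹ with hydef
    have hmky : QuotientGroup.mk y = C₀ := by
      rw [← hmkx₀]
      refine QuotientGroup.eq.mpr ?_
      have : (x₀ * a⁻¹)⁻¹ * x₀ = a := by group
      rw [hydef, this]; exact haK
    have hmky' : QuotientGroup.mk y⁻¹ = C' := by
      rw [← hzmk]
      refine QuotientGroup.eq.mpr ?_
      have : (x₀ * a⁻¹)⁻¹⁻¹ * (a * x₀⁻¹ * b) = b := by group
      rw [hydef, hzeq, this]; exact hbK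
    set S' := (S \ {C₀}) \ {C'} with hS'
    have hcard1 : (S \ {C₀}).ncard + 1 = n := by
      rw [← hcard]; exact Set.ncard_diff_singleton_add_one hC₀
    have hcard' : S'.ncard + 2 = n := by
      have : S'.ncard + 1 = (S \ {C₀}).ncard :=
        Set.ncard_diff_singleton_add_one ⟨hC'S, hC'ne⟩
      omega
    -- membership helper facts
    have hC₀notinv : C₀ ∉ OD K x₀⁻¹ := by
      intro hmem
      exact hself (memOD_iff x₀ C₀ hC₀O x₀⁻¹ hmem)
    have hC'notO : C' ∉ OD K x₀ := by
      intro hmem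
      exact hself (sameD_trans (memOD_iff x₀ C' hmem x₀⁻¹ hC'O) (sameD_refl x₀⁻¹))
    have hbal' : ∀ x : G, (S' ∩ OD K x).ncard = (S' ∩ OD K x⁻¹).ncard := by
      intro x
      by_cases hx : C₀ ∈ OD K x
      · have hs1 : sameD K x x₀ := memOD_iff x C₀ hx x₀ hC₀O
        have hODx : OD K x = OD K x₀ := OD_eq_of_sameD hs1
        have hODxinv : OD K x⁻¹ = OD K x₀⁻¹ := OD_eq_of_sameD (sameD_inv hs1)
        have e1 : (S' ∩ OD K x).ncard + 1 = (S ∩ OD K x₀).ncard := by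
          rw [hODx, hS', inter_diff_of_not_mem _ _ C' hC'notO, inter_diff S _ C₀]
          exact Set.ncard_diff_singleton_add_one ⟨hC₀, hC₀O⟩
        have e2 : (S' ∩ OD K x⁻¹).ncard + 1 = (S ∩ OD K x₀⁻¹).ncard := by
          rw [hODxinv, hS', inter_diff _ _ C', inter_diff_of_not_mem S _ C₀ hC₀notinv]
          exact Set.ncard_diff_singleton_add_one ⟨hC'S, hC'O⟩
        have := hbal x₀
        have hbx : (S ∩ OD K x₀).ncard = (S ∩ OD K x₀⁻¹).ncard := by
          have h1 := hbal x
          rw [hODx, hODxinv] at h1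
          exact h1
        omega
      · by_cases hx' : C₀ ∈ OD K x⁻¹
        · have hs1 : sameD K x⁻¹ x₀ := memOD_iff x⁻¹ C₀ hx' x₀ hC₀O
          have hs2 : sameD K x x₀⁻¹ := by
            have := sameD_inv hs1; rwa [inv_inv] at this
          have hODx : OD K x = OD K x₀⁻¹ := OD_eq_of_sameD hs2
          have hODxinv : OD K x⁻¹ = OD K x₀ := OD_eq_of_sameD hs1
          have e1 : (S' ∩ OD K x).ncard + 1 = (S ∩ OD K x₀⁻¹).ncard := by
            rw [hODx, hS', inter_diff _ _ C', inter_diff_of_not_mem S _ C₀ hC₀notinv]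
            exact Set.ncard_diff_singleton_add_one ⟨hC'S, hC'O⟩
          have e2 : (S' ∩ OD K x⁻¹).ncard + 1 = (S ∩ OD K x₀).ncard := by
            rw [hODxinv, hS', inter_diff_of_not_mem _ _ C' hC'notO, inter_diff S _ C₀]
            exact Set.ncard_diff_singleton_add_one ⟨hC₀, hC₀O⟩
          have hbx : (S ∩ OD K x₀).ncard = (S ∩ OD K x₀⁻¹).ncard := hbal x₀
          omega
        · -- neither C₀ nor C' meets OD x or OD x⁻¹
          have hxC' : C' ∉ OD K x := by
            intro hmem
            apply hx'
            have hs : sameD K x x₀⁻¹ := memOD_iff x C' hmem x₀⁻¹ hC'O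
            have : sameD K x⁻¹ x₀ := by
              have := sameD_inv hs; rwa [inv_inv] at this
            exact (OD_eq_of_sameD this) ▸ hC₀O
          have hxinvC' : C' ∉ OD K x⁻¹ := by
            intro hmem
            apply hx
            have hs : sameD K x⁻¹ x₀⁻¹ := memOD_iff x⁻¹ C' hmem x₀⁻¹ hC'O
            have : sameD K x x₀ := by
              have := sameD_inv hs; rwa [inv_inv, inv_inv] at this
            exact (OD_eq_of_sameD this) ▸ hC₀O
          rw [hS', inter_diff_of_not_mem _ _ C' hxC', inter_diff_of_not_mem S _ C₀ hx,
            inter_diff_of_not_mem _ _ C' hxinvC', inter_diff_of_not_mem S _ C₀ hx']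
          exact hbal x
    have hwit' : ∀ x : G, sameD K x x⁻¹ → Odd ((S' ∩ OD K x).ncard) →
        ∃ w' : G, w' * w' = 1 ∧ QuotientGroup.mk w' ∈ S' ∧ sameD K x w' := by
      intro x hxs hodd'
      have hx : C₀ ∉ OD K x := by
        intro hmem
        apply hself
        have hs1 : sameD K x x₀ := memOD_iff x C₀ hmem x₀ hC₀O
        exact sameD_trans (sameD_trans (sameD_symm hs1) hxs) (sameD_inv hs1)
      have hx' : C₀ ∉ OD K x⁻¹ := by
        intro hmem
        apply hself
        have hs1 : sameD K x⁻¹ x₀ := memOD_iff x⁻¹ C₀ hmem x₀ hC₀O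
        have hs2 : sameD K x x₀⁻¹ := by
          have := sameD_inv hs1; rwa [inv_inv] at this
        exact sameD_symm (sameD_trans (sameD_trans (sameD_symm hs2) hxs) hs1)
      have hxC' : C' ∉ OD K x := by
        intro hmem
        apply hx'
        have hs : sameD K x x₀⁻¹ := memOD_iff x C' hmem x₀⁻¹ hC'O
        have : sameD K x⁻¹ x₀ := by
          have := sameD_inv hs; rwa [inv_inv] at this
        exact (OD_eq_of_sameD this) ▸ hC₀O
      have hsets : S' ∩ OD K x = S ∩ OD K x := by
        rw [hS', inter_diff_of_not_mem _ _ C' hxC', inter_diff_of_not_mem S _ C₀ hx]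
      rw [hsets] at hodd'
      obtain ⟨w', h1, h2, h3⟩ := hwit x hxs hodd'
      have hw'O : QuotientGroup.mk w' ∈ OD K x := inD_mk.mpr h3
      refine ⟨w', h1, ⟨⟨h2, ?_⟩, ?_⟩, h3⟩
      · intro hmem
        rw [Set.mem_singleton_iff] at hmem
        exact hx (hmem ▸ hw'O)
      · intro hmem
        rw [Set.mem_singleton_iff] at hmem
        exact hxC' (hmem ▸ hw'O)
    obtain ⟨T', hT1, hT2, hT3⟩ := ih S'.ncard (by omega) S' rfl hbal' hwit'
    exact step_pair S C₀ C' hC'ne y hmky hmky' hC₀ hC'S T' hT1 hT2 hT3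


variable {G : Type*} [Group G] {K : Subgroup G}




lemma sufficiency [Finite G] (K : Subgroup G) (hc : CritProp K) : IsPerfectCode K := by
  obtain ⟨T, hT1, _, hT3⟩ := suff_aux K (Set.univ.ncard) Set.univ rfl
    (fun x => by rw [Set.univ_inter, Set.univ_inter]; exact card_OD_inv x)
    (fun x hs ho => by
      rw [Set.univ_inter] at ho
      obtain ⟨w, h1, h2⟩ := hc x hs ho
      exact ⟨w, h1, Set.mem_univ _, h2⟩)
  refine ⟨T, ?_, ?_⟩
  · ext t
    rw [Set.mem_inv]
    constructor
    · intro h; have := hT1 _ h; rwa [inv_inv] at this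
    · intro h; exact hT1 _ h
  · intro g
    obtain ⟨t, ⟨ht1, ht2⟩, ht3⟩ := hT3 (QuotientGroup.mk g) (Set.mem_univ _)
    refine ⟨t, ⟨ht1, QuotientGroup.eq.mp ht2⟩, ?_⟩
    rintro y ⟨hy1, hy2⟩
    exact ht3 y ⟨hy1, QuotientGroup.eq.mpr hy2⟩

/-- The set of left `Q`-cosets contained in the double coset `H x H`. -/
def Wset (H Q : Subgroup G) (x : G) : Set (G ⧸ Q) :=
  {C | ∃ z, QuotientGroup.mk z = C ∧ sameD H x z}

variable {Q H : Subgroup G}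

/-- the projection `G ⧸ Q → G ⧸ H` for `Q ≤ H`. -/
def projQH (hQH : Q ≤ H) : G ⧸ Q → G ⧸ H :=
  fun C => Quotient.liftOn' C QuotientGroup.mk
    (fun _ _ hab => QuotientGroup.eq.mpr (hQH (QuotientGroup.leftRel_apply.mp hab)))

lemma projQH_mk (hQH : Q ≤ H) (z : G) :
    projQH hQH (QuotientGroup.mk z) = QuotientGroup.mk z := rfl

noncomputable def WEquiv (hQH : Q ≤ H) (x : G) :
    (Wset H Q x) ≃ (OD H x) × (↥H ⧸ Q.subgroupOf H) where
  toFun := fun ⟨C, hC⟩ =>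
    (⟨projQH hQH C, by
        obtain ⟨z, hz, hs⟩ := hC
        exact ⟨z, by rw [← hz, projQH_mk], hs⟩⟩,
     QuotientGroup.mk ⟨(projQH hQH C).out⁻¹ * C.out, by
        have h1 : QuotientGroup.mk ((projQH hQH C).out) = projQH hQH C :=
          QuotientGroup.out_eq' _
        have h2 : projQH hQH C = QuotientGroup.mk C.out := by
          rw [← QuotientGroup.out_eq' C, projQH_mk, QuotientGroup.out_eq']
        exact QuotientGroup.eq.mp (h1.trans h2)⟩)
  invFun := fun ⟨⟨c, hc⟩, d⟩ =>
    ⟨Quotient.liftOn' d (fun h => QuotientGroup.mk (c.out * (h : ↥H)))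
      (fun h h' hr => QuotientGroup.eq.mpr (by
        have hm := QuotientGroup.leftRel_apply.mp hr
        rw [Subgroup.mem_subgroupOf] at hm
        have : (c.out * (h : ↥H))⁻¹ * (c.out * (h' : ↥H)) = ((h : ↥H) : G)⁻¹ * (h' : ↥H) := by
          group
        rw [this]
        exact hm)), by
      induction d using Quotient.inductionOn' with
      | h d =>
        obtain ⟨z, hz, hs⟩ := hc
        refine ⟨c.out * (d : ↥H), rfl, ?_⟩
        have hcout : sameD H x c.out := by
          refine sameD_trans hs (sameD_of_mk_eq ?_)
          rw [hz, QuotientGroup.out_eq']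
        exact sameD_mul_right hcout (d : ↥H).2⟩
  left_inv := fun ⟨C, hC⟩ => by
    apply Subtype.ext
    show QuotientGroup.mk ((projQH hQH C).out * ((projQH hQH C).out⁻¹ * C.out)) = C
    rw [mul_inv_cancel_left, QuotientGroup.out_eq']
  right_inv := fun ⟨⟨c, hc⟩, d⟩ => by
    induction d using Quotient.inductionOn' with
    | h d =>
      set C' : G ⧸ Q := QuotientGroup.mk (c.out * (d : ↥H)) with hC'
      have hfst : projQH hQH C' = c := by
        rw [hC', projQH_mk]
        have : (QuotientGroup.mk (c.out * (d : ↥H)) : G ⧸ H) = QuotientGroup.mk c.out := by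
          refine QuotientGroup.eq.mpr ?_
          have h : (c.out * ((d : ↥H) : G))⁻¹ * c.out = ((d : ↥H) : G)⁻¹ := by group
          rw [h]
          exact inv_mem (d : ↥H).2
        rw [this, QuotientGroup.out_eq']
      have hq : (c.out * ((d : ↥H) : G))⁻¹ * C'.out ∈ Q := by
        refine QuotientGroup.eq.mp ?_
        rw [hC']
        exact (QuotientGroup.out_eq' _).symm
      refine Prod.ext ?_ ?_
      · apply Subtype.ext
        exact hfst
      · show QuotientGroup.mk ⟨(projQH hQH C').out⁻¹ * C'.out, _⟩ = Quotient.mk'' d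
        refine QuotientGroup.eq.mpr ?_
        rw [Subgroup.mem_subgroupOf]
        have hout : (projQH hQH C').out = c.out := by rw [hfst]
        show ((projQH hQH C').out⁻¹ * C'.out)⁻¹ * ((d : ↥H) : G) ∈ Q
        rw [hout]
        have halg : (c.out⁻¹ * C'.out)⁻¹ * ((d : ↥H) : G)
            = ((c.out * ((d : ↥H) : G))⁻¹ * C'.out)⁻¹ := by group
        rw [halg]
        exact inv_mem hq


variable {G : Type*} [Group G] {K : Subgroup G}



lemma ncard_Wset [Finite G] {Q H : Subgroup G} (hQH : Q ≤ H) (x : G) :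
    (Wset H Q x).ncard = (OD H x).ncard * Q.relIndex H := by
  rw [← Nat.card_coe_set_eq, ← Nat.card_coe_set_eq,
    Nat.card_congr (WEquiv hQH x), Nat.card_prod]
  rfl

lemma claim_odd [Finite G] (Q : Subgroup G) :
    ∀ n (W : Set (G ⧸ Q)), W.ncard = n →
      (∀ z z' : G, QuotientGroup.mk z ∈ W → sameD Q z z' → QuotientGroup.mk z' ∈ W) →
      (∀ z : G, QuotientGroup.mk z ∈ W → QuotientGroup.mk z⁻¹ ∈ W) →
      Odd n →
      ∃ z : G, QuotientGroup.mk z ∈ W ∧ sameD Q z z⁻¹ ∧ Odd (OD Q z).ncard := by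
  intro n
  induction n using Nat.strong_induction_on with
  | _ n ih =>
  intro W hcard h1 h2 hodd
  have hWne : W.Nonempty := by
    apply Set.nonempty_of_ncard_ne_zero
    rw [hcard]
    rintro rfl
    exact (Nat.not_odd_iff_even.mpr Even.zero) hodd
  obtain ⟨C₀, hC₀⟩ := hWne
  have hmk : QuotientGroup.mk C₀.out = C₀ := QuotientGroup.out_eq' C₀
  set z := C₀.out with hzdef
  have hzW : QuotientGroup.mk z ∈ W := hmk ▸ hC₀
  have hOW : OD Q z ⊆ W := by
    rintro C ⟨u, hu, hsu⟩
    rw [← hu]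
    exact h1 z u hzW hsu
  have hO'W : OD Q z⁻¹ ⊆ W := by
    rintro C ⟨u, hu, hsu⟩
    rw [← hu]
    exact h1 z⁻¹ u (h2 z hzW) hsu
  by_cases hself : sameD Q z z⁻¹
  · by_cases ho : Odd (OD Q z).ncard
    · exact ⟨z, hzW, hself, ho⟩
    · set W' := W \ OD Q z with hW'
      have hsub : (OD Q z).ncard ≤ n := by
        rw [← hcard]; exact Set.ncard_le_ncard hOW (Set.toFinite _)
      have hOpos : (OD Q z).ncard ≠ 0 := by
        have : (OD Q z).Nonempty := ⟨QuotientGroup.mk z, mk_mem_OD_self z⟩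
        have := (Set.ncard_pos (Set.toFinite _)).mpr this
        omega
      have hcard' : W'.ncard = n - (OD Q z).ncard := by
        rw [hW', Set.ncard_diff hOW, hcard]
      have hlt : W'.ncard < n := by omega
      have hodd' : Odd W'.ncard := by
        rw [Nat.not_odd_iff_even] at ho
        rw [hcard']
        rcases hodd with ⟨k, hk⟩
        rcases ho with ⟨m, hm⟩
        exact ⟨k - m, by omega⟩
      have h1' : ∀ u u' : G, QuotientGroup.mk u ∈ W' → sameD Q u u' →
          QuotientGroup.mk u' ∈ W' := by
        rintro u u' ⟨huW, huO⟩ hs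
        refine ⟨h1 u u' huW hs, ?_⟩
        intro hmem
        exact huO (inD_mk.mpr (sameD_trans (inD_mk.mp hmem) (sameD_symm hs)))
      have h2' : ∀ u : G, QuotientGroup.mk u ∈ W' → QuotientGroup.mk u⁻¹ ∈ W' := by
        rintro u ⟨huW, huO⟩
        refine ⟨h2 u huW, ?_⟩
        intro hmem
        apply huO
        have hs : sameD Q z u⁻¹ := inD_mk.mp hmem
        have hs2 : sameD Q z⁻¹ u := by
          have := sameD_inv hs; rwa [inv_inv] at this
        exact inD_mk.mpr (sameD_trans hself hs2)
      obtain ⟨u, hu1, hu2, hu3⟩ := ih W'.ncard hlt W' rfl h1' h2' hodd'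
      exact ⟨u, hu1.1, hu2, hu3⟩
  · -- non-self-paired double coset : remove both
    have hdisj : Disjoint (OD Q z) (OD Q z⁻¹) := by
      rw [Set.disjoint_left]
      intro C hC hC'
      exact hself (sameD_of_inD_inD hC hC')
    have hcup : OD Q z ∪ OD Q z⁻¹ ⊆ W := Set.union_subset hOW hO'W
    have hcupcard : (OD Q z ∪ OD Q z⁻¹).ncard = 2 * (OD Q z).ncard := by
      rw [Set.ncard_union_eq hdisj, ← card_OD_inv z]
      omega
    have hsub : (OD Q z ∪ OD Q z⁻¹).ncard ≤ n := by
      rw [← hcard]; exact Set.ncard_le_ncard hcup (Set.toFinite _)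
    have hOpos : (OD Q z).ncard ≠ 0 := by
      have : (OD Q z).Nonempty := ⟨QuotientGroup.mk z, mk_mem_OD_self z⟩
      have := (Set.ncard_pos (Set.toFinite _)).mpr this
      omega
    set W' := W \ (OD Q z ∪ OD Q z⁻¹) with hW'
    have hcard' : W'.ncard = n - 2 * (OD Q z).ncard := by
      rw [hW', Set.ncard_diff hcup, hcard, hcupcard]
    have hlt : W'.ncard < n := by omega
    have hodd' : Odd W'.ncard := by
      rw [hcard']
      rcases hodd with ⟨k, hk⟩
      exact ⟨k - (OD Q z).ncard, by omega⟩
    have h1' : ∀ u u' : G, QuotientGroup.mk u ∈ W' → sameD Q u u' →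
        QuotientGroup.mk u' ∈ W' := by
      rintro u u' ⟨huW, huO⟩ hs
      rw [Set.mem_union] at huO
      push_neg at huO
      refine ⟨h1 u u' huW hs, ?_⟩
      rw [Set.mem_union]
      push_neg
      constructor
      · intro hmem
        exact huO.1 (inD_mk.mpr (sameD_trans (inD_mk.mp hmem) (sameD_symm hs)))
      · intro hmem
        exact huO.2 (inD_mk.mpr (sameD_trans (inD_mk.mp hmem) (sameD_symm hs)))
    have h2' : ∀ u : G, QuotientGroup.mk u ∈ W' → QuotientGroup.mk u⁻¹ ∈ W' := by
      rintro u ⟨huW, huO⟩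
      rw [Set.mem_union] at huO
      push_neg at huO
      refine ⟨h2 u huW, ?_⟩
      rw [Set.mem_union]
      push_neg
      constructor
      · intro hmem
        apply huO.2
        have hs : sameD Q z u⁻¹ := inD_mk.mp hmem
        have hs2 : sameD Q z⁻¹ u := by
          have := sameD_inv hs; rwa [inv_inv] at this
        exact inD_mk.mpr hs2
      · intro hmem
        apply huO.1
        have hs : sameD Q z⁻¹ u⁻¹ := inD_mk.mp hmem
        have hs2 : sameD Q z u := by
          have := sameD_inv hs; rwa [inv_inv, inv_inv] at this
        exact inD_mk.mpr hs2
    obtain ⟨u, hu1, hu2, hu3⟩ := ih W'.ncard hlt W' rfl h1' h2' hodd'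
    exact ⟨u, hu1.1, hu2, hu3⟩

theorem main [Finite G] (H Q : Subgroup G) (hQH : Q ≤ H)
    (hQodd : Odd (Q.relIndex H)) (hQpc : IsPerfectCode Q) : IsPerfectCode H := by
  have critQ : CritProp Q := necessity hQpc
  apply sufficiency
  intro x hself hodd
  have hWodd : Odd (Wset H Q x).ncard := by
    rw [ncard_Wset hQH x]
    exact hodd.mul hQodd
  have hc1 : ∀ z z' : G, QuotientGroup.mk z ∈ Wset H Q x → sameD Q z z' →
      QuotientGroup.mk z' ∈ Wset H Q x := by
    rintro z z' ⟨z₀, hz₀, hs₀⟩ hszz'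
    refine ⟨z', rfl, ?_⟩
    have hxz : sameD H x z := sameD_trans hs₀ (sameD_mono hQH (sameD_of_mk_eq hz₀))
    exact sameD_trans hxz (sameD_mono hQH hszz')
  have hc2 : ∀ z : G, QuotientGroup.mk z ∈ Wset H Q x →
      QuotientGroup.mk z⁻¹ ∈ Wset H Q x := by
    rintro z ⟨z₀, hz₀, hs₀⟩
    refine ⟨z⁻¹, rfl, ?_⟩
    have hxz : sameD H x z := sameD_trans hs₀ (sameD_mono hQH (sameD_of_mk_eq hz₀))
    exact sameD_trans hself (sameD_inv hxz)
  obtain ⟨z, hzW, hzself, hzodd⟩ :=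
    claim_odd Q (Wset H Q x).ncard (Wset H Q x) rfl hc1 hc2 hWodd
  obtain ⟨w, hw1, hw2⟩ := critQ z hzself hzodd
  obtain ⟨z₀, hz₀, hs₀⟩ := hzW
  have hxz : sameD H x z := sameD_trans hs₀ (sameD_mono hQH (sameD_of_mk_eq hz₀))
  exact ⟨w, hw1, sameD_trans hxz (sameD_mono hQH hw2)⟩

end PCAux

theorem perfectCode_of_sylow_two_perfectCode {G : Type*} [Group G] [Finite G]
    (H Q : Subgroup G) (hQH : Q ≤ H) (hQ2 : IsPGroup 2 Q)
    (hQodd : Odd (Q.relIndex H)) (hQ : IsPerfectCode Q) :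
    IsPerfectCode H := by
  exact PCAux.main H Q hQH hQodd hQ
end

section
/- Let G be a finite group and H a subgroup of G. If H is a perfect code of G, then every Sylow 2-subgroup of H is a perfect code of G. -/
namespace PerfectCodeAux

/-- A fixed-point free involution forces even cardinality (Finset version). -/
lemma even_card_filter_ne {α : Type*} [DecidableEq α] (f : α → α)
    (hf : ∀ a, f (f a) = a) (s : Finset α) (hs : ∀ a ∈ s, f a ∈ s)
    (hne : ∀ a ∈ s, f a ≠ a) : Even s.card := by
  classical
  have key : ∀ n (s : Finset α), (∀ a ∈ s, f a ∈ s) → (∀ a ∈ s, f a ≠ a) →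
      s.card = n → Even n := by
    intro n
    induction n using Nat.strong_induction_on with
    | _ n ih =>
      intro s hs hne hn
      rcases Finset.eq_empty_or_nonempty s with rfl | ⟨a, ha⟩
      · simp [← hn]
      · have hfa : f a ∈ s := hs a ha
        have hfaa : f a ≠ a := hne a ha
        set t := (s.erase a).erase (f a) with ht
        have hcard : s.card = t.card + 2 := by
          rw [ht, Finset.card_erase_of_mem (Finset.mem_erase.2 ⟨hfaa, hfa⟩),
            Finset.card_erase_of_mem ha]
          have h2 : 2 ≤ s.card := Finset.one_lt_card.2 ⟨a, ha, f a, hfa, fun h => hfaa h.symm⟩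
          omega
        have htsub : ∀ b ∈ t, f b ∈ t := by
          intro b hb
          rw [ht] at hb ⊢
          simp only [Finset.mem_erase] at hb ⊢
          refine ⟨?_, ?_, hs b hb.2.2⟩
          · intro h; apply hb.2.1; rw [← hf b, h, hf]
          · intro h; apply hb.1; rw [← hf b, h]
        have hnet : ∀ b ∈ t, f b ≠ b := by
          intro b hb; exact hne b (Finset.mem_of_mem_erase (Finset.mem_of_mem_erase hb))
        have : Even t.card := ih t.card (by omega) t htsub hnet rfl
        rw [← hn, hcard]
        exact this.add even_two
  exact key s.card s hs hne rfl

/-- An involution on a finite type of odd cardinality has a fixed point. -/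
lemma exists_fixed_of_involutive_odd {α : Type*} [Finite α] (f : α → α)
    (hf : ∀ a, f (f a) = a) (hodd : Odd (Nat.card α)) : ∃ a, f a = a := by
  classical
  cases nonempty_fintype α
  by_contra h
  push_neg at h
  have : Even (Finset.univ : Finset α).card :=
    even_card_filter_ne f hf _ (fun a _ => Finset.mem_univ _) (fun a _ => h a)
  rw [Nat.card_eq_fintype_card, ← Finset.card_univ] at hodd
  exact (Nat.not_even_iff_odd.2 hodd) this

/-- A finite type of even cardinality admits a fixed-point free involution. -/
lemma exists_fpf_involution {α : Type*} [Finite α] (h : Even (Nat.card α)) :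
    ∃ f : α → α, (∀ a, f (f a) = a) ∧ ∀ a, f a ≠ a := by
  classical
  cases nonempty_fintype α
  obtain ⟨m, hm⟩ := h
  have hm' : Nat.card α = 2 * m := by omega
  rw [Nat.card_eq_fintype_card] at hm'
  have e : α ≃ Fin (2 * m) := Fintype.equivFinOfCardEq hm'
  refine ⟨fun a => e.symm (⟨if (e a).val < m then (e a).val + m else (e a).val - m, by
    have := (e a).isLt; split <;> omega⟩), fun a => ?_, fun a => ?_⟩
  · have hlt := (e a).isLt
    simp only [Equiv.apply_symm_apply]
    apply e.injective
    simp only [Equiv.apply_symm_apply]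
    ext
    simp only
    split <;> split <;> omega
  · intro hfa
    have := congrArg e hfa
    simp only [Equiv.apply_symm_apply] at this
    have := congrArg Fin.val this
    simp only at this
    have hlt := (e a).isLt
    split at this <;> omega


section Forward

variable {G : Type*} [Group G] [Finite G]

open Subgroup

/-- Forward direction: if `H` is a perfect code, `g * g ∈ H`, and the number of left
cosets of `H` in the double coset `HgH` (i.e. the relative index of `H ⊓ gHg⁻¹` in `H`)
is odd, then `gH` contains an element of order dividing 2. -/
lemma forward (H : Subgroup G) (hpc : IsPerfectCode H) (g : G) (hg2 : g * g ∈ H)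
    (hodd : Odd ((H ⊓ H.map (MulAut.conj g).toMonoidHom).relIndex H)) :
    ∃ t : G, t * t = 1 ∧ g⁻¹ * t ∈ H := by
  classical
  obtain ⟨T, hTinv, hT⟩ := hpc
  set rep : G → G := fun x => (hT x).choose with hrepdef
  have hrep1 : ∀ x, rep x ∈ T := fun x => (hT x).choose_spec.1.1
  have hrep2 : ∀ x, (rep x)⁻¹ * x ∈ H := fun x => (hT x).choose_spec.1.2
  have hrep3 : ∀ x s, s ∈ T → s⁻¹ * x ∈ H → s = rep x :=
    fun x s hsT hsH => (hT x).choose_spec.2 s ⟨hsT, hsH⟩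
  have hinvT : ∀ s, s ∈ T → s⁻¹ ∈ T := by
    intro s hs
    rw [← hTinv]
    simpa using hs
  have rep_coset : ∀ x y, x⁻¹ * y ∈ H → rep x = rep y := by
    intro x y hxy
    refine hrep3 y (rep x) (hrep1 x) ?_
    have := H.mul_mem (hrep2 x) hxy
    rwa [← mul_assoc, mul_assoc ((rep x)⁻¹) x x⁻¹, mul_inv_cancel, mul_one] at this
  have hTmem : ∀ s, s ∈ T → rep s = s := by
    intro s hs
    refine (hrep3 s s hs ?_).symm
    rw [inv_mul_cancel]
    exact H.one_mem
  -- the representative of a coset's `out` lies in the coset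
  have out_mk : ∀ C : G ⧸ H, QuotientGroup.mk C.out = C := fun C => QuotientGroup.out_eq' C
  have rep_mk : ∀ C : G ⧸ H, QuotientGroup.mk (rep C.out) = C := by
    intro C
    rw [← out_mk C]
    exact (QuotientGroup.eq.2 (by simpa using H.inv_mem (hrep2 C.out))).symm
  -- the type of left cosets of `H` inside the double coset `HgH`
  set SC := {C : G ⧸ H // ∃ h, h ∈ H ∧ C = QuotientGroup.mk (h * g)} with hSC
  -- σ : SC → SC sending a coset to the coset of the inverse of its representative
  have hsigma_mem : ∀ C : SC, ∃ h', h' ∈ H ∧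
      (QuotientGroup.mk (rep C.1.out)⁻¹ : G ⧸ H) = QuotientGroup.mk (h' * g) := by
    rintro ⟨C, h, hh, rfl⟩
    set u := rep (QuotientGroup.mk (h * g) : G ⧸ H).out with hu
    have h1 : QuotientGroup.mk u = (QuotientGroup.mk (h * g) : G ⧸ H) := rep_mk _
    have h2 : (h * g)⁻¹ * u ∈ H := QuotientGroup.eq.1 h1.symm
    refine ⟨u⁻¹ * h * g, ?_, ?_⟩
    · have : u⁻¹ * h * g = ((h * g)⁻¹ * u)⁻¹ := by group
      rw [this]
      exact H.inv_mem h2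
    · rw [QuotientGroup.eq]
      have : u⁻¹⁻¹ * (u⁻¹ * h * g * g) = h * (g * g) := by group
      rw [this]
      exact H.mul_mem hh hg2
  set σ : SC → SC := fun C => ⟨QuotientGroup.mk (rep C.1.out)⁻¹, hsigma_mem C⟩ with hσ
  have hσval : ∀ C : SC, (σ C).1 = QuotientGroup.mk (rep C.1.out)⁻¹ := fun _ => rfl
  have hinvol : ∀ C, σ (σ C) = C := by
    intro C
    apply Subtype.ext
    have hu : QuotientGroup.mk (rep C.1.out) = C.1 := rep_mk C.1
    have h1 : rep ((σ C).1.out) = rep ((rep C.1.out)⁻¹) := by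
      apply rep_coset
      have h0 := QuotientGroup.out_eq' (σ C).1
      rw [hσval] at h0
      exact QuotientGroup.eq.1 h0
    have h2 : rep ((rep C.1.out)⁻¹) = (rep C.1.out)⁻¹ :=
      hTmem _ (hinvT _ (hrep1 _))
    rw [hσval, hσval, h1, h2, inv_inv, hu]
  -- cardinality of SC equals the relative index
  set K := H ⊓ H.map (MulAut.conj g).toMonoidHom with hK
  set J := K.subgroupOf H with hJ
  have e : (↥H ⧸ J) ≃ SC := by
    refine Equiv.ofBijective (fun x => Quotient.liftOn' x
      (fun h => (⟨QuotientGroup.mk ((h : G) * g), ⟨(h : G), h.2, rfl⟩⟩ : SC)) ?_) ⟨?_, ?_⟩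
    · intro h₁ h₂ hrel
      rw [QuotientGroup.leftRel_apply] at hrel
      have hrel' : ((h₁ : G)⁻¹ * h₂ : G) ∈ K := hrel
      apply Subtype.ext
      simp only
      rw [QuotientGroup.eq]
      obtain ⟨k, hk, hkeq⟩ := hrel'.2
      have hcj : (MulAut.conj g).toMonoidHom k = g * k * g⁻¹ := rfl
      rw [hcj] at hkeq
      have : ((h₁ : G) * g)⁻¹ * ((h₂ : G) * g) = g⁻¹ * ((h₁ : G)⁻¹ * (h₂ : G)) * g := by group
      rw [this, ← hkeq]
      have : g⁻¹ * (g * k * g⁻¹) * g = k := by group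
      rw [this]
      exact hk
    · intro x₁ x₂ hx
      induction x₁ using Quotient.inductionOn' with
      | h h₁ =>
      induction x₂ using Quotient.inductionOn' with
      | h h₂ =>
      simp only [Quotient.liftOn'_mk''] at hx
      have hx' := congrArg Subtype.val hx
      simp only at hx'
      rw [QuotientGroup.eq] at hx'
      apply Quotient.sound'
      rw [QuotientGroup.leftRel_apply]
      show ((h₁ : G)⁻¹ * h₂ : G) ∈ K
      have hmem : (h₁ : G)⁻¹ * h₂ ∈ H := H.mul_mem (H.inv_mem h₁.2) h₂.2
      refine ⟨hmem, ⟨g⁻¹ * ((h₁ : G)⁻¹ * (h₂ : G)) * g, ?_, ?_⟩⟩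
      · have : g⁻¹ * ((h₁ : G)⁻¹ * (h₂ : G)) * g = ((h₁ : G) * g)⁻¹ * ((h₂ : G) * g) := by
          group
        rw [this]
        exact hx'
      · show g * (g⁻¹ * ((h₁ : G)⁻¹ * (h₂ : G)) * g) * g⁻¹ = _
        group
    · rintro ⟨C, h, hh, rfl⟩
      refine ⟨Quotient.mk'' ⟨h, hh⟩, rfl⟩
  have hcard : Nat.card SC = K.relIndex H := by
    rw [← Nat.card_congr e]
    rfl
  obtain ⟨C₀, hC₀⟩ := exists_fixed_of_involutive_odd σ hinvol (by rw [hcard]; exact hodd)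
  set z := rep C₀.1.out with hz
  have h1 : QuotientGroup.mk z = C₀.1 := rep_mk C₀.1
  have h2 : (QuotientGroup.mk z⁻¹ : G ⧸ H) = C₀.1 := by
    have := congrArg Subtype.val hC₀
    rw [hσval] at this
    exact this
  have hzz : z * z ∈ H := by
    have := QuotientGroup.eq.1 (h2.trans h1.symm)
    rwa [inv_inv] at this
  have hrepz : z⁻¹ = rep z := hrep3 z z⁻¹ (hinvT z (hrep1 _)) (by rwa [inv_inv])
  have hzself : rep z = z := hTmem z (hrep1 _)
  have hzinv : z⁻¹ = z := hrepz.trans hzself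
  have hz1 : z * z = 1 := by
    nth_rewrite 1 [← hzinv]
    exact inv_mul_cancel z
  obtain ⟨h, hh, hCval⟩ := C₀.2
  have hh2 : (h * g)⁻¹ * z ∈ H := QuotientGroup.eq.1 (hCval ▸ h1).symm
  refine ⟨h⁻¹ * z * h, ?_, ?_⟩
  · have : h⁻¹ * z * h * (h⁻¹ * z * h) = h⁻¹ * (z * z) * h := by group
    rw [this, hz1]
    group
  · have : g⁻¹ * (h⁻¹ * z * h) = ((h * g)⁻¹ * z) * h := by group
    rw [this]
    exact H.mul_mem hh2 hh

end Forward

section Construction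

variable {G : Type*} [Group G] (Q : Subgroup G)

/-- The double coset `QxQ` as a set. -/
def dos (x : G) : Set G := {z | ∃ a ∈ Q, ∃ c ∈ Q, z = a * x * c}

lemma mem_dos_self (x : G) : x ∈ dos Q x :=
  ⟨1, Q.one_mem, 1, Q.one_mem, by simp⟩

lemma dos_trans {x y w : G} (h1 : x ∈ dos Q y) (h2 : y ∈ dos Q w) : x ∈ dos Q w := by
  obtain ⟨a, ha, c, hc, rfl⟩ := h1
  obtain ⟨a', ha', c', hc', rfl⟩ := h2
  exact ⟨a * a', Q.mul_mem ha ha', c' * c, Q.mul_mem hc' hc, by group⟩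

lemma dos_symm {x y : G} (h : x ∈ dos Q y) : y ∈ dos Q x := by
  obtain ⟨a, ha, c, hc, rfl⟩ := h
  exact ⟨a⁻¹, Q.inv_mem ha, c⁻¹, Q.inv_mem hc, by group⟩

lemma dos_inv {x y : G} (h : x ∈ dos Q y) : x⁻¹ ∈ dos Q y⁻¹ := by
  obtain ⟨a, ha, c, hc, rfl⟩ := h
  exact ⟨c⁻¹, Q.inv_mem hc, a⁻¹, Q.inv_mem ha, by group⟩

lemma dos_mul_right {x z : G} (h : z ∈ dos Q x) {q : G} (hq : q ∈ Q) :
    z * q ∈ dos Q x := by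
  obtain ⟨a, ha, c, hc, rfl⟩ := h
  exact ⟨a, ha, c * q, Q.mul_mem hc hq, by group⟩

lemma dos_mul_left {x z : G} (h : z ∈ dos Q x) {q : G} (hq : q ∈ Q) :
    q * z ∈ dos Q x := by
  obtain ⟨a, ha, c, hc, rfl⟩ := h
  exact ⟨q * a, Q.mul_mem hq ha, c, hc, by group⟩

/-- The relation whose classes are `QxQ ∪ Qx⁻¹Q`. -/
def drel (x y : G) : Prop := x ∈ dos Q y ∨ x ∈ dos Q y⁻¹

lemma drel_refl (x : G) : drel Q x x := Or.inl (mem_dos_self Q x)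

lemma drel_symm {x y : G} (h : drel Q x y) : drel Q y x := by
  rcases h with h | h
  · exact Or.inl (dos_symm Q h)
  · have := dos_inv Q (dos_symm Q h)
    rw [inv_inv] at this
    exact Or.inr this

lemma drel_trans {x y z : G} (h1 : drel Q x y) (h2 : drel Q y z) : drel Q x z := by
  rcases h1 with h1 | h1 <;> rcases h2 with h2 | h2
  · exact Or.inl (dos_trans Q h1 h2)
  · exact Or.inr (dos_trans Q h1 h2)
  · have h2' : y⁻¹ ∈ dos Q z⁻¹ := dos_inv Q h2
    exact Or.inr (dos_trans Q h1 h2')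
  · have h2' : y⁻¹ ∈ dos Q z := by
      have := dos_inv Q h2
      rwa [inv_inv] at this
    exact Or.inl (dos_trans Q h1 h2')

/-- The setoid of generalized double cosets `QxQ ∪ Qx⁻¹Q`. -/
def dsetoid : Setoid G :=
  ⟨drel Q, ⟨drel_refl Q, drel_symm Q, drel_trans Q⟩⟩

/-- Canonical base point of the class of `x`. -/
noncomputable def dbase (x : G) : G := (Quotient.mk (dsetoid Q) x).out

lemma dbase_rel (x : G) : drel Q x (dbase Q x) :=
  drel_symm Q (Quotient.mk_out (s := dsetoid Q) x)

lemma dbase_eq_of_rel {x y : G} (h : drel Q x y) : dbase Q x = dbase Q y := by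
  unfold dbase
  rw [Quotient.sound (s := dsetoid Q) h]

lemma dbase_dbase (x : G) : dbase Q (dbase Q x) = dbase Q x :=
  dbase_eq_of_rel Q (Quotient.mk_out (s := dsetoid Q) x)

section Counting

variable [Finite G]

lemma out_mem_dos {b x : G} (hx : x ∈ dos Q b) : (QuotientGroup.mk x : G ⧸ Q).out ∈ dos Q b := by
  have h1 : (QuotientGroup.mk ((QuotientGroup.mk x : G ⧸ Q).out) : G ⧸ Q) = QuotientGroup.mk x :=
    QuotientGroup.out_eq' _
  have h2 : x⁻¹ * (QuotientGroup.mk x : G ⧸ Q).out ∈ Q := QuotientGroup.eq.1 h1.symm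
  have : (QuotientGroup.mk x : G ⧸ Q).out = x * (x⁻¹ * (QuotientGroup.mk x : G ⧸ Q).out) := by
    group
  rw [this]
  exact dos_mul_right Q hx h2

lemma card_cosets_mul (b : G) :
    Nat.card {C : G ⧸ Q // C.out ∈ dos Q b} * Nat.card Q = Nat.card (dos Q b) := by
  rw [← Nat.card_prod]
  apply Nat.card_congr
  refine Equiv.ofBijective (fun p => ⟨p.1.1.out * p.2, dos_mul_right Q p.1.2 p.2.2⟩) ⟨?_, ?_⟩
  · rintro ⟨⟨C₁, h₁⟩, q₁⟩ ⟨⟨C₂, h₂⟩, q₂⟩ heq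
    have heq' : C₁.out * (q₁ : G) = C₂.out * (q₂ : G) := congrArg Subtype.val heq
    have hC : C₁ = C₂ := by
      rw [← QuotientGroup.out_eq' C₁, ← QuotientGroup.out_eq' C₂, QuotientGroup.eq]
      have h4 : Quotient.out C₂ = Quotient.out C₁ * (q₁ : G) * (q₂ : G)⁻¹ := by
        rw [heq']
        group
      have h3 : (Quotient.out C₁)⁻¹ * Quotient.out C₂ = (q₁ : G) * (q₂ : G)⁻¹ := by
        rw [h4]
        group
      rw [h3]
      exact Q.mul_mem q₁.2 (Q.inv_mem q₂.2)
    subst hC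
    have : (q₁ : G) = q₂ := by
      exact mul_left_cancel heq'
    simp [Subtype.ext this]
  · rintro ⟨d, hd⟩
    refine ⟨⟨⟨QuotientGroup.mk d, out_mem_dos Q hd⟩,
      ⟨(QuotientGroup.mk d : G ⧸ Q).out⁻¹ * d, QuotientGroup.eq.1 (QuotientGroup.out_eq' _)⟩⟩, ?_⟩
    apply Subtype.ext
    simp only
    group

lemma card_dos_inv (b : G) : Nat.card (dos Q b) = Nat.card (dos Q b⁻¹) := by
  apply Nat.card_congr
  refine Equiv.ofBijective (fun z => ⟨(z : G)⁻¹, dos_inv Q z.2⟩) ⟨?_, ?_⟩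
  · rintro ⟨z₁, h₁⟩ ⟨z₂, h₂⟩ heq
    have : (z₁ : G)⁻¹ = z₂⁻¹ := congrArg Subtype.val heq
    exact Subtype.ext (inv_injective this)
  · rintro ⟨z, hz⟩
    refine ⟨⟨z⁻¹, by have := dos_inv Q hz; rwa [inv_inv] at this⟩, by simp⟩

lemma card_cosets_eq (b : G) :
    Nat.card {C : G ⧸ Q // C.out ∈ dos Q b} = Nat.card {C : G ⧸ Q // C.out ∈ dos Q b⁻¹} := by
  have h1 := card_cosets_mul Q b
  have h2 := card_cosets_mul Q b⁻¹
  have h3 := card_dos_inv Q b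
  have hQpos : 0 < Nat.card Q := Nat.card_pos
  apply Nat.eq_of_mul_eq_mul_right hQpos
  rw [h1, h2, h3]

lemma card_cosets_dvd (b : G) :
    Nat.card {C : G ⧸ Q // C.out ∈ dos Q b} ∣ Nat.card Q := by
  set J := (Q.map (MulAut.conj b).toMonoidHom).subgroupOf Q with hJ
  have e : (↥Q ⧸ J) ≃ {C : G ⧸ Q // C.out ∈ dos Q b} := by
    refine Equiv.ofBijective (fun x => Quotient.liftOn' x
      (fun q => (⟨QuotientGroup.mk ((q : G) * b),
        out_mem_dos Q ⟨q, q.2, 1, Q.one_mem, by group⟩⟩ :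
        {C : G ⧸ Q // C.out ∈ dos Q b})) ?_) ⟨?_, ?_⟩
    · intro q₁ q₂ hrel
      rw [QuotientGroup.leftRel_apply] at hrel
      have hrel' : ((q₁ : G)⁻¹ * q₂ : G) ∈ Q.map (MulAut.conj b).toMonoidHom := hrel
      obtain ⟨k, hk, hkeq⟩ := hrel'
      have hcj : (MulAut.conj b).toMonoidHom k = b * k * b⁻¹ := rfl
      rw [hcj] at hkeq
      apply Subtype.ext
      simp only
      rw [QuotientGroup.eq]
      have : ((q₁ : G) * b)⁻¹ * ((q₂ : G) * b) = b⁻¹ * ((q₁ : G)⁻¹ * (q₂ : G)) * b := by group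
      rw [this, ← hkeq]
      have : b⁻¹ * (b * k * b⁻¹) * b = k := by group
      rw [this]
      exact hk
    · intro x₁ x₂ hx
      induction x₁ using Quotient.inductionOn' with
      | h q₁ =>
      induction x₂ using Quotient.inductionOn' with
      | h q₂ =>
      simp only [Quotient.liftOn'_mk''] at hx
      have hx' := congrArg Subtype.val hx
      simp only at hx'
      rw [QuotientGroup.eq] at hx'
      apply Quotient.sound'
      rw [QuotientGroup.leftRel_apply]
      show ((q₁ : G)⁻¹ * q₂ : G) ∈ Q.map (MulAut.conj b).toMonoidHom
      refine ⟨((q₁ : G) * b)⁻¹ * ((q₂ : G) * b), hx', ?_⟩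
      show b * (((q₁ : G) * b)⁻¹ * ((q₂ : G) * b)) * b⁻¹ = (q₁ : G)⁻¹ * q₂
      group
    · rintro ⟨C, hC⟩
      obtain ⟨a, ha, c, hc, hout⟩ := hC
      refine ⟨Quotient.mk'' ⟨a, ha⟩, ?_⟩
      apply Subtype.ext
      simp only [Quotient.liftOn'_mk'']
      rw [← QuotientGroup.out_eq' C, hout, QuotientGroup.eq]
      have : (a * b)⁻¹ * (a * b * c) = c := by group
      rw [this]
      exact hc
  rw [← Nat.card_congr e]
  have hla : Nat.card ↥Q = Nat.card (↥Q ⧸ J) * Nat.card J :=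
    Subgroup.card_eq_card_quotient_mul_card_subgroup J
  exact ⟨Nat.card J, hla⟩

lemma normalizer_of_conj_le {b : G} (hle : ∀ q ∈ Q, b⁻¹ * q * b ∈ Q) :
    b ∈ (Subgroup.normalizer (Q : Set G)) := by
  have hinj : Function.Injective (fun q : ↥Q => (⟨b⁻¹ * q * b, hle q q.2⟩ : ↥Q)) := by
    rintro ⟨q₁, h₁⟩ ⟨q₂, h₂⟩ heq
    have := congrArg (Subtype.val) heq
    simp only at this
    apply Subtype.ext
    exact mul_left_cancel (mul_right_cancel this)
  have hsurj := (Finite.injective_iff_surjective).1 hinj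
  rw [Subgroup.mem_normalizer_iff]
  intro h
  constructor
  · intro hh
    obtain ⟨⟨q, hq⟩, hqeq⟩ := hsurj ⟨h, hh⟩
    have : b⁻¹ * q * b = h := congrArg Subtype.val hqeq
    have hbq : b * h * b⁻¹ = q := by rw [← this]; group
    rw [hbq]
    exact hq
  · intro hh
    have := hle _ hh
    have heq : b⁻¹ * (b * h * b⁻¹) * b = h := by group
    rwa [heq] at this

lemma even_card_cosets (h2 : IsPGroup 2 Q) {b : G} (hb : b ∉ (Subgroup.normalizer (Q : Set G))) :
    Even (Nat.card {C : G ⧸ Q // C.out ∈ dos Q b}) := by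
  haveI : Fact (Nat.Prime 2) := ⟨Nat.prime_two⟩
  obtain ⟨k, hk⟩ := IsPGroup.iff_card.1 h2
  have hdvd := card_cosets_dvd Q b
  rw [hk] at hdvd
  obtain ⟨j, hjk, hcj⟩ := (Nat.dvd_prime_pow Nat.prime_two).1 hdvd
  rcases Nat.eq_zero_or_pos j with rfl | hjpos
  · exfalso
    apply hb
    apply normalizer_of_conj_le
    intro q hq
    rw [pow_zero] at hcj
    have hsub : Subsingleton {C : G ⧸ Q // C.out ∈ dos Q b} :=
      (Nat.card_eq_one_iff_unique.1 hcj).1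
    have hqb : q * b ∈ dos Q b := ⟨q, hq, 1, Q.one_mem, by group⟩
    have heq := hsub.elim ⟨QuotientGroup.mk (q * b), out_mem_dos Q hqb⟩
      ⟨QuotientGroup.mk b, out_mem_dos Q (mem_dos_self Q b)⟩
    have heq' : (QuotientGroup.mk (q * b) : G ⧸ Q) = QuotientGroup.mk b :=
      congrArg Subtype.val heq
    have hmem := QuotientGroup.eq.1 heq'
    have : (q * b)⁻¹ * b = b⁻¹ * q⁻¹ * b := by group
    rw [this] at hmem
    have := Q.inv_mem hmem
    have hrw : (b⁻¹ * q⁻¹ * b)⁻¹ = b⁻¹ * q * b := by group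
    rwa [hrw] at this
  · rw [hcj]
    exact (Nat.even_pow).2 ⟨even_two, hjpos.ne'⟩

/-- Pair of cosets in inverse double cosets have "inverse-compatible" representatives. -/
lemma exists_pair_rep {w : G} {C D : G ⧸ Q} (hC : C.out ∈ dos Q w)
    (hD : D.out ∈ dos Q w⁻¹) :
    ∃ z : G, QuotientGroup.mk z = C ∧ QuotientGroup.mk z⁻¹ = D := by
  obtain ⟨a, ha, c, hc, hCe⟩ := hC
  obtain ⟨a', ha', c', hc', hDe⟩ := hD
  refine ⟨a * w * a'⁻¹, ?_, ?_⟩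
  · rw [← QuotientGroup.out_eq' C, hCe, QuotientGroup.eq]
    have : (a * w * a'⁻¹)⁻¹ * (a * w * c) = a' * c := by group
    rw [this]
    exact Q.mul_mem ha' hc
  · rw [← QuotientGroup.out_eq' D, hDe, QuotientGroup.eq]
    have : (a * w * a'⁻¹)⁻¹⁻¹ * (a' * w⁻¹ * c') = a * c' := by group
    rw [this]
    exact Q.mul_mem ha hc'

/-- Per-class pairing lemma. -/
lemma cls (h2 : IsPGroup 2 Q)
    (key : ∀ y ∈ (Subgroup.normalizer (Q : Set G)), y * y ∈ Q → ∃ t, t * t = 1 ∧ y⁻¹ * t ∈ Q) (b : G) :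
    ∃ π : {C : G ⧸ Q // drel Q C.out b} → {C : G ⧸ Q // drel Q C.out b},
      (∀ C, π (π C) = C) ∧
      ∀ C, ∃ z : G, QuotientGroup.mk z = C.1 ∧ QuotientGroup.mk z⁻¹ = (π C).1 ∧
        (π C = C → z * z = 1) := by
  classical
  by_cases hsym : b⁻¹ ∈ dos Q b
  · by_cases hbn : b ∈ (Subgroup.normalizer (Q : Set G))
    · -- symmetric, single-coset class: use `key`
      refine ⟨id, fun C => rfl, ?_⟩
      intro C
      -- square of b is in Q
      obtain ⟨a₀, ha₀, c₀, hc₀, hb₀⟩ := hsym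
      have hb2 : b * b ∈ Q := by
        have h1 : b * a₀ * b = c₀⁻¹ := by
          have : b * (a₀ * b * c₀) = 1 := by rw [← hb₀]; group
          have h2 : b * a₀ * b * c₀ = 1 := by rw [← this]; group
          calc b * a₀ * b = (b * a₀ * b * c₀) * c₀⁻¹ := by group
          _ = c₀⁻¹ := by rw [h2]; group
        have ha₀' : b * a₀ * b⁻¹ ∈ Q := (Subgroup.mem_normalizer_iff.1 hbn a₀).1 ha₀
        have h3 : b * b = (b * a₀ * b⁻¹)⁻¹ * c₀⁻¹ := by
          rw [← h1]; group
        rw [h3]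
        exact Q.mul_mem (Q.inv_mem ha₀') (Q.inv_mem hc₀)
      -- the element y := C.1.out normalizes Q and has square in Q
      have hkey : ∀ w : G, w ∈ (Subgroup.normalizer (Q : Set G)) → w * w ∈ Q → C.1.out ∈ dos Q w →
          C.1.out ∈ (Subgroup.normalizer (Q : Set G)) ∧ C.1.out * C.1.out ∈ Q := by
        intro w hwN hw2 hmem
        obtain ⟨a, ha, c, hc, he⟩ := hmem
        constructor
        · rw [he]
          exact Subgroup.normalizer (G := G) (Q : Set G) |>.mul_mem
            (Subgroup.normalizer (Q : Set G) |>.mul_mem (Subgroup.le_normalizer ha) hwN)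
            (Subgroup.le_normalizer hc)
        · rw [he]
          have h4 : a * w * c * (a * w * c) = a * (w * (c * a) * w⁻¹) * (w * w) * c := by
            group
          rw [h4]
          have h5 : w * (c * a) * w⁻¹ ∈ Q :=
            (Subgroup.mem_normalizer_iff.1 hwN (c * a)).1 (Q.mul_mem hc ha)
          exact Q.mul_mem (Q.mul_mem (Q.mul_mem ha h5) hw2) hc
      have hy : C.1.out ∈ (Subgroup.normalizer (Q : Set G)) ∧ C.1.out * C.1.out ∈ Q := by
        rcases C.2 with hmem | hmem
        · exact hkey b hbn hb2 hmem
        · refine hkey b⁻¹ (Subgroup.normalizer (Q : Set G) |>.inv_mem hbn) ?_ hmem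
          have : b⁻¹ * b⁻¹ = (b * b)⁻¹ := by group
          rw [this]
          exact Q.inv_mem hb2
      obtain ⟨t, ht1, ht2⟩ := key C.1.out hy.1 hy.2
      have htinv : t⁻¹ = t := by
        rw [← mul_one t⁻¹, ← ht1]
        group
      have hmkt : QuotientGroup.mk t = C.1 := by
        rw [← QuotientGroup.out_eq' C.1, QuotientGroup.eq]
        have := Q.inv_mem ht2
        rwa [mul_inv_rev, inv_inv] at this
      exact ⟨t, hmkt, by rw [htinv]; exact hmkt, fun _ => ht1⟩
    · -- symmetric class with more than one coset: fixed-point free pairing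
      have hBsubA : ∀ x, x ∈ dos Q b⁻¹ → x ∈ dos Q b := fun x hx => dos_trans Q hx hsym
      have hAsubB : ∀ x, x ∈ dos Q b → x ∈ dos Q b⁻¹ := by
        intro x hx
        have hb' : b ∈ dos Q b⁻¹ := by
          have := dos_inv Q hsym
          rwa [inv_inv] at this
        exact dos_trans Q hx hb'
      have hall : ∀ C : {C : G ⧸ Q // drel Q C.out b}, C.1.out ∈ dos Q b := by
        rintro ⟨C, hC | hC⟩
        · exact hC
        · exact hBsubA _ hC
      have hev : Even (Nat.card {C : G ⧸ Q // drel Q C.out b}) := by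
        have e : {C : G ⧸ Q // drel Q C.out b} ≃ {C : G ⧸ Q // C.out ∈ dos Q b} :=
          Equiv.subtypeEquivRight (fun C => ⟨fun h => hall ⟨C, h⟩, fun h => Or.inl h⟩)
        rw [Nat.card_congr e]
        exact even_card_cosets Q h2 hbn
      obtain ⟨π, hπinv, hπfpf⟩ := exists_fpf_involution hev
      refine ⟨π, hπinv, ?_⟩
      intro C
      obtain ⟨z, hz1, hz2⟩ := exists_pair_rep Q (hall C) (hAsubB _ (hall (π C)))
      exact ⟨z, hz1, hz2, fun h => absurd h (hπfpf C)⟩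
  · -- asymmetric class: pair the two double cosets
    have hdisj : ∀ x, x ∈ dos Q b → x ∈ dos Q b⁻¹ → False := by
      intro x h1 h2
      have hbx : b ∈ dos Q x := dos_symm Q h1
      have : b ∈ dos Q b⁻¹ := dos_trans Q hbx h2
      have := dos_inv Q this
      rw [inv_inv] at this
      exact hsym this
    obtain ⟨eAB⟩ : Nonempty ({C : G ⧸ Q // C.out ∈ dos Q b} ≃
        {C : G ⧸ Q // C.out ∈ dos Q b⁻¹}) :=
      Finite.card_eq.1 (card_cosets_eq Q b)
    set π : {C : G ⧸ Q // drel Q C.out b} → {C : G ⧸ Q // drel Q C.out b} :=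
      fun C => if h : C.1.out ∈ dos Q b
        then ⟨(eAB ⟨C.1, h⟩).1, Or.inr (eAB ⟨C.1, h⟩).2⟩
        else ⟨(eAB.symm ⟨C.1, C.2.resolve_left h⟩).1,
          Or.inl (eAB.symm ⟨C.1, C.2.resolve_left h⟩).2⟩ with hπ
    have hπA : ∀ (C : {C : G ⧸ Q // drel Q C.out b}) (h : C.1.out ∈ dos Q b),
        π C = ⟨(eAB ⟨C.1, h⟩).1, Or.inr (eAB ⟨C.1, h⟩).2⟩ := by
      intro C h
      rw [hπ]
      simp only [dif_pos h]
    have hπB : ∀ (C : {C : G ⧸ Q // drel Q C.out b}) (h : ¬ C.1.out ∈ dos Q b),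
        π C = ⟨(eAB.symm ⟨C.1, C.2.resolve_left h⟩).1,
          Or.inl (eAB.symm ⟨C.1, C.2.resolve_left h⟩).2⟩ := by
      intro C h
      rw [hπ]
      simp only [dif_neg h]
    have hπinv : ∀ C, π (π C) = C := by
      intro C
      by_cases h : C.1.out ∈ dos Q b
      · rw [hπA C h]
        have hout : (eAB ⟨C.1, h⟩).1.out ∈ dos Q b⁻¹ := (eAB ⟨C.1, h⟩).2
        have hnot : ¬ (eAB ⟨C.1, h⟩).1.out ∈ dos Q b := fun hmem => hdisj _ hmem hout
        rw [hπB _ hnot]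
        apply Subtype.ext
        have : (⟨(eAB ⟨C.1, h⟩).1, hout⟩ : {C : G ⧸ Q // C.out ∈ dos Q b⁻¹}) =
            eAB ⟨C.1, h⟩ := Subtype.ext rfl
        rw [this, Equiv.symm_apply_apply]
      · rw [hπB C h]
        have hout : (eAB.symm ⟨C.1, C.2.resolve_left h⟩).1.out ∈ dos Q b :=
          (eAB.symm ⟨C.1, C.2.resolve_left h⟩).2
        rw [hπA _ hout]
        apply Subtype.ext
        have : (⟨(eAB.symm ⟨C.1, C.2.resolve_left h⟩).1, hout⟩ :
            {C : G ⧸ Q // C.out ∈ dos Q b}) = eAB.symm ⟨C.1, C.2.resolve_left h⟩ :=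
          Subtype.ext rfl
        rw [this, Equiv.apply_symm_apply]
    refine ⟨π, hπinv, ?_⟩
    intro C
    by_cases h : C.1.out ∈ dos Q b
    · have hπC := hπA C h
      have hout : (π C).1.out ∈ dos Q b⁻¹ := by rw [hπC]; exact (eAB ⟨C.1, h⟩).2
      obtain ⟨z, hz1, hz2⟩ := exists_pair_rep Q h hout
      refine ⟨z, hz1, hz2, fun hfix => ?_⟩
      exfalso
      have : (π C).1.out ∈ dos Q b := by rw [hfix]; exact h
      exact hdisj _ this hout
    · have hC : C.1.out ∈ dos Q b⁻¹ := C.2.resolve_left h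
      have hπC := hπB C h
      have hout : (π C).1.out ∈ dos Q b := by
        rw [hπC]; exact (eAB.symm ⟨C.1, hC⟩).2
      have hout' : (π C).1.out ∈ dos Q (b⁻¹)⁻¹ := by rwa [inv_inv]
      obtain ⟨z, hz1, hz2⟩ := exists_pair_rep Q hC hout'
      refine ⟨z, hz1, hz2, fun hfix => ?_⟩
      exfalso
      have : C.1.out ∈ dos Q b := by rw [← hfix]; exact hout
      exact hdisj _ this hC

/-- Unguarded version of `cls`, with a pairing defined on the whole coset space. -/
lemma cls' (h2 : IsPGroup 2 Q)
    (key : ∀ y ∈ (Subgroup.normalizer (Q : Set G)), y * y ∈ Q → ∃ t, t * t = 1 ∧ y⁻¹ * t ∈ Q) (b : G) :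
    ∃ π : (G ⧸ Q) → (G ⧸ Q),
      (∀ C, drel Q C.out b → drel Q (π C).out b) ∧
      (∀ C, drel Q C.out b → π (π C) = C) ∧
      (∀ C, drel Q C.out b → ∃ z : G, QuotientGroup.mk z = C ∧
        QuotientGroup.mk z⁻¹ = π C ∧ (π C = C → z * z = 1)) := by
  classical
  obtain ⟨π₀, hinv, hz⟩ := cls Q h2 key b
  refine ⟨fun C => if h : drel Q C.out b then (π₀ ⟨C, h⟩).1 else C, ?_, ?_, ?_⟩
  · intro C h
    simp only [dif_pos h]
    exact (π₀ ⟨C, h⟩).2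
  · intro C h
    have h2' : drel Q (π₀ ⟨C, h⟩).1.out b := (π₀ ⟨C, h⟩).2
    simp only [dif_pos h, dif_pos h2']
    have : (⟨(π₀ ⟨C, h⟩).1, h2'⟩ : {C : G ⧸ Q // drel Q C.out b}) = π₀ ⟨C, h⟩ :=
      Subtype.ext rfl
    rw [this, hinv]
  · intro C h
    simp only [dif_pos h]
    obtain ⟨z, hz1, hz2, hz3⟩ := hz ⟨C, h⟩
    refine ⟨z, hz1, hz2, fun hfix => hz3 (Subtype.ext hfix)⟩

/-- The backward construction: the pairing criterion implies that `Q` is a perfect code. -/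
lemma constr (h2 : IsPGroup 2 Q)
    (key : ∀ y ∈ (Subgroup.normalizer (Q : Set G)), y * y ∈ Q → ∃ t, t * t = 1 ∧ y⁻¹ * t ∈ Q) :
    IsPerfectCode Q := by
  classical
  choose π hπcls hπinv hπz using cls' Q h2 key
  set Pi : G ⧸ Q → G ⧸ Q := fun C => π (dbase Q C.out) C with hPidef
  have hCrel : ∀ C : G ⧸ Q, drel Q C.out (dbase Q C.out) := fun C => dbase_rel Q C.out
  have hbasePi : ∀ C : G ⧸ Q, dbase Q (Pi C).out = dbase Q C.out := by
    intro C
    have h1 : drel Q (Pi C).out (dbase Q C.out) := hπcls _ C (hCrel C)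
    rw [dbase_eq_of_rel Q h1, dbase_dbase]
  have hPiinv : ∀ C, Pi (Pi C) = C := by
    intro C
    show π (dbase Q (Pi C).out) (Pi C) = C
    rw [hbasePi C]
    exact hπinv _ C (hCrel C)
  have hPiz : ∀ C : G ⧸ Q, ∃ z : G, QuotientGroup.mk z = C ∧
      QuotientGroup.mk z⁻¹ = Pi C ∧ (Pi C = C → z * z = 1) :=
    fun C => hπz _ C (hCrel C)
  choose zf hzf1 hzf2 hzf3 using hPiz
  -- a linear ordering device
  obtain ⟨n, ⟨eFin⟩⟩ := Finite.exists_equiv_fin (G ⧸ Q)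
  set ν : G ⧸ Q → ℕ := fun C => (eFin C).val with hν
  have hνinj : Function.Injective ν := by
    intro C₁ C₂ h
    exact eFin.injective (Fin.ext h)
  -- the representative function
  set ρ : G ⧸ Q → G := fun C =>
    if Pi C = C then zf C
    else if ν C ≤ ν (Pi C) then zf C else (zf (Pi C))⁻¹ with hρdef
  have hρmem : ∀ C, QuotientGroup.mk (ρ C) = C := by
    intro C
    rw [hρdef]
    by_cases h1 : Pi C = C
    · simp only [if_pos h1]; exact hzf1 C
    · by_cases h2 : ν C ≤ ν (Pi C)
      · simp only [if_neg h1, if_pos h2]; exact hzf1 C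
      · simp only [if_neg h1, if_neg h2]
        rw [hzf2 (Pi C), hPiinv]
  have hρinv : ∀ C, ∃ C', ρ C' = (ρ C)⁻¹ := by
    intro C
    by_cases h1 : Pi C = C
    · refine ⟨C, ?_⟩
      have hzz := hzf3 C h1
      have : (zf C)⁻¹ = zf C := by
        rw [← mul_one (zf C)⁻¹, ← hzz]
        group
      rw [hρdef]
      simp only [if_pos h1]
      exact this.symm
    · refine ⟨Pi C, ?_⟩
      have h1' : Pi (Pi C) ≠ Pi C := by
        rw [hPiinv]
        exact fun h => h1 h.symm
      have hνne : ν C ≠ ν (Pi C) := fun h => h1 (hνinj h).symm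
      have h1'' : ¬ (C = Pi C) := fun h => h1 h.symm
      rw [hρdef]
      simp only [if_neg h1, if_neg h1', hPiinv, if_neg h1'']
      by_cases h2 : ν C ≤ ν (Pi C)
      · have h2' : ¬ ν (Pi C) ≤ ν C := by
          intro hle
          exact hνne (le_antisymm h2 hle)
        simp only [if_neg h2', if_pos h2]
      · have h2' : ν (Pi C) ≤ ν C := le_of_not_ge h2
        simp only [if_pos h2', if_neg h2, inv_inv]
  refine ⟨Set.range ρ, ?_, ?_⟩
  · ext x
    simp only [Set.mem_inv, Set.mem_range]
    constructor
    · rintro ⟨C, hC⟩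
      obtain ⟨C', hC'⟩ := hρinv C
      exact ⟨C', by rw [hC', hC, inv_inv]⟩
    · rintro ⟨C, hC⟩
      obtain ⟨C', hC'⟩ := hρinv C
      exact ⟨C', by rw [hC', hC]⟩
  · intro g
    refine ⟨ρ (QuotientGroup.mk g), ⟨⟨_, rfl⟩, ?_⟩, ?_⟩
    · exact QuotientGroup.eq.1 (hρmem (QuotientGroup.mk g))
    · rintro s ⟨⟨C', rfl⟩, hs2⟩
      have h1 : QuotientGroup.mk (ρ C') = C' := hρmem C'
      have h2' : (QuotientGroup.mk (ρ C') : G ⧸ Q) = QuotientGroup.mk g := by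
        rw [QuotientGroup.eq]
        exact hs2
      rw [h1] at h2'
      rw [h2']

end Counting

end Construction

section Key

variable {G : Type*} [Group G]

/-- Extension of a subgroup `K` by an element `y` normalizing it with `y * y ∈ K`:
the subgroup `K ∪ yK`. -/
def extSubgroup (K : Subgroup G) (y : G) (hyN : y ∈ (Subgroup.normalizer (K : Set G))) (hy2 : y * y ∈ K) :
    Subgroup G where
  carrier := {z | z ∈ K ∨ y⁻¹ * z ∈ K}
  one_mem' := Or.inl K.one_mem
  mul_mem' := by
    have hconj : ∀ k ∈ K, y⁻¹ * k * y ∈ K := by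
      intro k hk
      have := (Subgroup.mem_normalizer_iff.1 ((Subgroup.normalizer (K : Set G)).inv_mem hyN) k).1 hk
      rwa [inv_inv] at this
    have hconj' : ∀ k ∈ K, y * k * y⁻¹ ∈ K := by
      intro k hk
      exact (Subgroup.mem_normalizer_iff.1 hyN k).1 hk
    rintro a b (ha | ha) (hb | hb)
    · exact Or.inl (K.mul_mem ha hb)
    · refine Or.inr ?_
      have : y⁻¹ * (a * b) = (y⁻¹ * a * y) * (y⁻¹ * b) := by group
      rw [this]
      exact K.mul_mem (hconj a ha) hb
    · refine Or.inr ?_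
      have : y⁻¹ * (a * b) = (y⁻¹ * a) * b := by group
      rw [this]
      exact K.mul_mem ha hb
    · refine Or.inl ?_
      have : a * b = (y * (y⁻¹ * a) * y⁻¹) * (y * y) * (y⁻¹ * b) := by group
      rw [this]
      exact K.mul_mem (K.mul_mem (hconj' _ ha) hy2) hb
  inv_mem' := by
    have hconj : ∀ k ∈ K, y⁻¹ * k * y ∈ K := by
      intro k hk
      have := (Subgroup.mem_normalizer_iff.1 ((Subgroup.normalizer (K : Set G)).inv_mem hyN) k).1 hk
      rwa [inv_inv] at this
    rintro a (ha | ha)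
    · exact Or.inl (K.inv_mem ha)
    · refine Or.inr ?_
      have : y⁻¹ * a⁻¹ = (y⁻¹ * (y⁻¹ * a)⁻¹ * y) * (y * y)⁻¹ := by group
      rw [this]
      exact K.mul_mem (hconj _ (K.inv_mem ha)) (K.inv_mem hy2)

lemma mem_extSubgroup_iff {K : Subgroup G} {y : G} {hyN : y ∈ (Subgroup.normalizer (K : Set G))}
    {hy2 : y * y ∈ K} {z : G} :
    z ∈ extSubgroup K y hyN hy2 ↔ z ∈ K ∨ y⁻¹ * z ∈ K := Iff.rfl

lemma le_extSubgroup {K : Subgroup G} {y : G} {hyN : y ∈ (Subgroup.normalizer (K : Set G))} {hy2 : y * y ∈ K} :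
    K ≤ extSubgroup K y hyN hy2 := fun _ hz => Or.inl hz

lemma self_mem_extSubgroup {K : Subgroup G} {y : G} {hyN : y ∈ (Subgroup.normalizer (K : Set G))}
    {hy2 : y * y ∈ K} : y ∈ extSubgroup K y hyN hy2 :=
  Or.inr (by rw [inv_mul_cancel]; exact K.one_mem)

lemma card_extSubgroup [Finite G] {K : Subgroup G} {y : G} {hyN : y ∈ (Subgroup.normalizer (K : Set G))}
    {hy2 : y * y ∈ K} (hyK : y ∉ K) :
    Nat.card (extSubgroup K y hyN hy2) = 2 * Nat.card K := by
  classical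
  have hdisj : ∀ z : G, z ∈ K → y⁻¹ * z ∈ K → False := by
    intro z h1 h2
    apply hyK
    have : y = z * (y⁻¹ * z)⁻¹ := by group
    rw [this]
    exact K.mul_mem h1 (K.inv_mem h2)
  have e : ↥(extSubgroup K y hyN hy2) ≃ (↥K ⊕ ↥K) := by
    refine Equiv.ofBijective (fun z => if h : (z : G) ∈ K then Sum.inl ⟨z, h⟩
      else Sum.inr ⟨y⁻¹ * z, z.2.resolve_left h⟩) ⟨?_, ?_⟩
    · rintro ⟨z₁, hz₁⟩ ⟨z₂, hz₂⟩ heq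
      apply Subtype.ext
      show z₁ = z₂
      by_cases h1 : z₁ ∈ K <;> by_cases h2 : z₂ ∈ K
      · simp only [dif_pos h1, dif_pos h2] at heq
        injection heq with h3
        exact congrArg Subtype.val h3
      · simp only [dif_pos h1, dif_neg h2] at heq
        exact (Sum.inl_ne_inr heq).elim
      · simp only [dif_neg h1, dif_pos h2] at heq
        exact (Sum.inr_ne_inl heq).elim
      · simp only [dif_neg h1, dif_neg h2] at heq
        injection heq with h3
        have h4 := congrArg Subtype.val h3
        simp only at h4
        exact mul_left_cancel h4
    · rintro (⟨k, hk⟩ | ⟨k, hk⟩)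
      · exact ⟨⟨k, Or.inl hk⟩, by simp only [dif_pos hk]⟩
      · refine ⟨⟨y * k, Or.inr (by rw [← mul_assoc, inv_mul_cancel, one_mul]; exact hk)⟩, ?_⟩
        have hnotK : y * k ∉ K := by
          intro hmem
          exact hdisj (y * k) hmem (by rw [← mul_assoc, inv_mul_cancel, one_mul]; exact hk)
        simp only [dif_neg hnotK]
        congr 1
        apply Subtype.ext
        simp only
        rw [← mul_assoc, inv_mul_cancel, one_mul]
  rw [Nat.card_congr e, Nat.card_sum]
  omega

variable [Finite G]

lemma key_lemma (H Q : Subgroup G) (hpc : IsPerfectCode H) (hQH : Q ≤ H)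
    (h2 : IsPGroup 2 Q) (hodd : Odd (Q.relIndex H)) :
    ∀ y ∈ (Subgroup.normalizer (Q : Set G)), y * y ∈ Q → ∃ t, t * t = 1 ∧ y⁻¹ * t ∈ Q := by
  classical
  haveI : Fact (Nat.Prime 2) := ⟨Nat.prime_two⟩
  intro y hyN hy2
  have hQpos : 0 < Nat.card Q := Nat.card_pos
  by_cases hyQ : y ∈ Q
  · exact ⟨1, by simp, by simpa using Q.inv_mem hyQ⟩
  by_cases hyH : y ∈ H
  · -- impossible: `Q ∪ yQ` would be a `2`-group between `Q` and `H`
    exfalso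
    set M := extSubgroup Q y hyN hy2 with hM
    have hQM : Q ≤ M := le_extSubgroup
    have hMH : M ≤ H := by
      rintro z (hz | hz)
      · exact hQH hz
      · have hze : z = y * (y⁻¹ * z) := by group
        rw [hze]
        exact H.mul_mem hyH (hQH hz)
    have hmul := Subgroup.relIndex_mul_relIndex Q M H hQM hMH
    have hoddQM : Odd (Q.relIndex M) := by
      rw [← hmul] at hodd
      exact (Nat.odd_mul.1 hodd).1
    have hcard : Nat.card M = 2 * Nat.card Q := card_extSubgroup hyQ
    have hcardsub : Nat.card (Q.subgroupOf M) = Nat.card Q :=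
      Nat.card_congr (Subgroup.subgroupOfEquivOfLe hQM).toEquiv
    have hlag : Nat.card (Q.subgroupOf M) * (Q.subgroupOf M).index = Nat.card M :=
      Subgroup.card_mul_index _
    rw [hcardsub, hcard, mul_comm 2 (Nat.card Q)] at hlag
    have hrel2 : Q.relIndex M = 2 := Nat.eq_of_mul_eq_mul_left hQpos hlag
    rw [hrel2, Nat.odd_iff] at hoddQM
    norm_num at hoddQM
  -- main case : y ∉ H
  have hy2H : y * y ∈ H := hQH hy2
  set K := H ⊓ H.map (MulAut.conj y).toMonoidHom with hK
  have hQK : Q ≤ K := by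
    intro q hq
    refine ⟨hQH hq, ⟨y⁻¹ * q * y, ?_, ?_⟩⟩
    · have := (Subgroup.mem_normalizer_iff.1 ((Subgroup.normalizer (Q : Set G)).inv_mem hyN) q).1 hq
      rw [inv_inv] at this
      exact hQH this
    · show y * (y⁻¹ * q * y) * y⁻¹ = q
      group
  have hKH : K ≤ H := inf_le_left
  have hoddK : Odd (K.relIndex H) := by
    have hmul := Subgroup.relIndex_mul_relIndex Q K H hQK hKH
    rw [← hmul] at hodd
    exact (Nat.odd_mul.1 hodd).2
  obtain ⟨t₀, ht01, ht02⟩ := forward H hpc y hy2H hoddK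
  set h := y⁻¹ * t₀ with hh
  have hhH : h ∈ H := ht02
  have ht₀ : y * h = t₀ := by rw [hh]; group
  have hyhyh : y * h * y = h⁻¹ := by
    have h1 : y * h * (y * h) = 1 := by rw [ht₀]; exact ht01
    calc y * h * y = (y * h * (y * h)) * h⁻¹ := by group
    _ = h⁻¹ := by rw [h1]; group
  -- the subgroup H₀ = ⟨Q, h⟩, normalized by y
  set H₀ := Subgroup.closure ({h} ∪ (Q : Set G)) with hH₀
  have hQH₀ : Q ≤ H₀ := fun q hq => Subgroup.subset_closure (Or.inr hq)
  have hhH₀ : h ∈ H₀ := Subgroup.subset_closure (Or.inl rfl)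
  have hH₀H : H₀ ≤ H := by
    rw [hH₀]
    refine (Subgroup.closure_le H).2 ?_
    rintro z (rfl | hz)
    · exact hhH
    · exact hQH hz
  have hy2H₀ : y * y ∈ H₀ := hQH₀ hy2
  have hyH₀N : y ∈ (Subgroup.normalizer (H₀ : Set G)) := by
    have hconjy : ∀ v, (MulAut.conj y).toMonoidHom v = y * v * y⁻¹ := fun v => rfl
    have hconjy' : ∀ v, (MulAut.conj y⁻¹).toMonoidHom v = y⁻¹ * v * y := by
      intro v
      show y⁻¹ * v * y⁻¹⁻¹ = y⁻¹ * v * y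
      rw [inv_inv]
    have hfwd : ∀ z ∈ H₀, y * z * y⁻¹ ∈ H₀ := by
      have hmap : H₀.map (MulAut.conj y).toMonoidHom ≤ H₀ := by
        rw [hH₀, MonoidHom.map_closure]
        refine (Subgroup.closure_le _).2 ?_
        rintro w ⟨v, hv, rfl⟩
        rcases hv with hv | hv
        · rw [Set.mem_singleton_iff] at hv
          subst hv
          rw [hconjy]
          have hrw : y * h * y⁻¹ = (y * h * y) * (y * y)⁻¹ := by group
          rw [hrw, hyhyh]
          exact Subgroup.mul_mem _ (Subgroup.inv_mem _ hhH₀) (Subgroup.inv_mem _ hy2H₀)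
        · rw [hconjy]
          exact hQH₀ ((Subgroup.mem_normalizer_iff.1 hyN v).1 hv)
      intro z hz
      have := hmap (Subgroup.mem_map_of_mem _ hz)
      rwa [hconjy] at this
    have hbwd : ∀ z ∈ H₀, y⁻¹ * z * y ∈ H₀ := by
      have hmap : H₀.map (MulAut.conj y⁻¹).toMonoidHom ≤ H₀ := by
        rw [hH₀, MonoidHom.map_closure]
        refine (Subgroup.closure_le _).2 ?_
        rintro w ⟨v, hv, rfl⟩
        rcases hv with hv | hv
        · rw [Set.mem_singleton_iff] at hv
          subst hv
          rw [hconjy']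
          have hrw : y⁻¹ * h * y = (y * y)⁻¹ * (y * h * y) := by group
          rw [hrw, hyhyh]
          exact Subgroup.mul_mem _ (Subgroup.inv_mem _ hy2H₀) (Subgroup.inv_mem _ hhH₀)
        · rw [hconjy']
          have := (Subgroup.mem_normalizer_iff.1 ((Subgroup.normalizer (Q : Set G)).inv_mem hyN) v).1 hv
          rw [inv_inv] at this
          exact hQH₀ this
      intro z hz
      have := hmap (Subgroup.mem_map_of_mem _ hz)
      rwa [hconjy'] at this
    rw [Subgroup.mem_normalizer_iff]
    intro z
    constructor
    · exact hfwd z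
    · intro hz
      have := hbwd _ hz
      have hrw : y⁻¹ * (y * z * y⁻¹) * y = z := by group
      rwa [hrw] at this
  -- the groups G₂ = H₀ ∪ yH₀ and M = Q ∪ yQ
  set G₂ := extSubgroup H₀ y hyH₀N hy2H₀ with hG₂
  set M := extSubgroup Q y hyN hy2 with hM
  have hyH₀ : y ∉ H₀ := fun hmem => hyH (hH₀H hmem)
  have hMG₂ : M ≤ G₂ := by
    rintro z (hz | hz)
    · exact Or.inl (hQH₀ hz)
    · exact Or.inr (hQH₀ hz)
  have ht₀G₂ : t₀ ∈ G₂ := Or.inr (by rw [← hh]; exact hhH₀)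
  have ht₀H₀ : t₀ ∉ H₀ := by
    intro hmem
    apply hyH₀
    have hye : y = t₀ * h⁻¹ := by rw [← ht₀]; group
    rw [hye]
    exact H₀.mul_mem hmem (H₀.inv_mem hhH₀)
  have hcardM : Nat.card M = 2 * Nat.card Q := card_extSubgroup hyQ
  have hcardG₂ : Nat.card G₂ = 2 * Nat.card H₀ := card_extSubgroup hyH₀
  set M' := M.subgroupOf G₂ with hM'
  set H₀' := H₀.subgroupOf G₂ with hH₀'
  have hcardM' : Nat.card M' = Nat.card M :=
    Nat.card_congr (Subgroup.subgroupOfEquivOfLe hMG₂).toEquiv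
  have hindexM' : Nat.card Q * M'.index = Nat.card H₀ := by
    have hlag : Nat.card M' * M'.index = Nat.card G₂ := Subgroup.card_mul_index _
    rw [hcardM', hcardM, hcardG₂, mul_assoc] at hlag
    exact Nat.eq_of_mul_eq_mul_left (by norm_num) hlag
  have hlagQ : Nat.card Q * Q.relIndex H₀ = Nat.card H₀ := by
    have hlag : Nat.card (Q.subgroupOf H₀) * (Q.subgroupOf H₀).index = Nat.card H₀ :=
      Subgroup.card_mul_index _
    rwa [Nat.card_congr (Subgroup.subgroupOfEquivOfLe hQH₀).toEquiv] at hlag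
  have hoddQH₀ : Odd (Q.relIndex H₀) := by
    have hmul := Subgroup.relIndex_mul_relIndex Q H₀ H hQH₀ hH₀H
    rw [← hmul] at hodd
    exact (Nat.odd_mul.1 hodd).1
  have hoddIdxM' : Odd M'.index := by
    have heq : M'.index = Q.relIndex H₀ :=
      Nat.eq_of_mul_eq_mul_left hQpos (by rw [hindexM', hlagQ])
    rw [heq]
    exact hoddQH₀
  obtain ⟨k, hk⟩ := IsPGroup.iff_card.1 h2
  have hM'2 : IsPGroup 2 M' := by
    apply IsPGroup.of_card (n := k + 1)
    rw [hcardM', hcardM, hk, pow_succ]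
    ring
  set t₀' : G₂ := ⟨t₀, ht₀G₂⟩ with ht₀'def
  have ht₀'sq : t₀' * t₀' = 1 := Subtype.ext ht01
  have hP2 : IsPGroup 2 (Subgroup.zpowers t₀') := by
    have hdvd : orderOf t₀' ∣ 2 := orderOf_dvd_of_pow_eq_one (by rw [pow_two]; exact ht₀'sq)
    rcases (Nat.dvd_prime Nat.prime_two).1 hdvd with hor | hor
    · exact IsPGroup.of_card (n := 0) (by rw [Nat.card_zpowers, hor, pow_zero])
    · exact IsPGroup.of_card (n := 1) (by rw [Nat.card_zpowers, hor, pow_one])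
  obtain ⟨S, hS⟩ := hM'2.exists_le_sylow
  have hMS : M' = (S : Subgroup G₂) := by
    refine le_antisymm hS ?_
    have hrel := Subgroup.relIndex_mul_index hS
    have hdvdodd : (M'.relIndex S) ∣ M'.index := Dvd.intro _ hrel
    have hoddrel : Odd (M'.relIndex S) := hoddIdxM'.of_dvd_nat hdvdodd
    have hrelpow : M'.relIndex S ∣ Nat.card S := by
      have hlag : Nat.card (M'.subgroupOf S) * (M'.subgroupOf S).index = Nat.card S :=
        Subgroup.card_mul_index _
      exact Dvd.intro_left _ hlag
    obtain ⟨mS, hmS⟩ := IsPGroup.iff_card.1 S.isPGroup'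
    rw [hmS] at hrelpow
    obtain ⟨j, hjle, hjeq⟩ := (Nat.dvd_prime_pow Nat.prime_two).1 hrelpow
    have hj0 : j = 0 := by
      by_contra hj
      have : Even (M'.relIndex S) := by
        rw [hjeq]
        exact (Nat.even_pow).2 ⟨even_two, hj⟩
      rw [← Nat.not_odd_iff_even] at this
      exact this hoddrel
    rw [hj0, pow_zero] at hjeq
    exact Subgroup.relIndex_eq_one.1 hjeq
  obtain ⟨S₂, hS₂⟩ := hP2.exists_le_sylow
  obtain ⟨w, hw⟩ := MulAction.exists_smul_eq G₂ S₂ S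
  have ht₀S₂ : t₀' ∈ S₂ := hS₂ (Subgroup.mem_zpowers t₀')
  set m : G₂ := w * t₀' * w⁻¹ with hmdef
  have hmM' : m ∈ M' := by
    rw [hMS, ← hw, Sylow.smul_def, Sylow.pointwise_smul_def]
    exact Subgroup.smul_mem_pointwise_smul _ _ _ ht₀S₂
  have hmsq : m * m = 1 := by
    rw [hmdef]
    have : w * t₀' * w⁻¹ * (w * t₀' * w⁻¹) = w * (t₀' * t₀') * w⁻¹ := by group
    rw [this, ht₀'sq]
    group
  have hH₀'norm : ∀ n : G₂, n ∈ H₀' → ∀ g : G₂, g * n * g⁻¹ ∈ H₀' := by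
    intro n hn g
    rw [Subgroup.mem_subgroupOf] at hn ⊢
    push_cast
    rcases g.2 with hz | hz
    · exact H₀.mul_mem (H₀.mul_mem hz hn) (H₀.inv_mem hz)
    · have hu : y⁻¹ * (g : G) ∈ H₀ := hz
      have hrw2 : (g : G) * (n : G) * (g : G)⁻¹ =
          y * ((y⁻¹ * (g : G)) * (n : G) * (y⁻¹ * (g : G))⁻¹) * y⁻¹ := by group
      rw [hrw2]
      exact (Subgroup.mem_normalizer_iff.1 hyH₀N _).1
        (H₀.mul_mem (H₀.mul_mem hu hn) (H₀.inv_mem hu))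
  have hmH₀' : m ∉ H₀' := by
    intro hmem
    have hconj := hH₀'norm m hmem w⁻¹
    have heq : w⁻¹ * m * w⁻¹⁻¹ = t₀' := by rw [hmdef]; group
    rw [heq, Subgroup.mem_subgroupOf] at hconj
    exact ht₀H₀ hconj
  have hmyQ : y⁻¹ * (m : G) ∈ Q := by
    have hmM : (m : G) ∈ M := by
      rw [hM'] at hmM'
      rw [Subgroup.mem_subgroupOf] at hmM'
      exact hmM'
    rcases hmM with hz | hz
    · exfalso
      apply hmH₀'
      rw [Subgroup.mem_subgroupOf]
      exact hQH₀ hz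
    · exact hz
  refine ⟨(m : G), ?_, hmyQ⟩
  have hval := congrArg (Subtype.val) hmsq
  push_cast at hval
  exact hval

end Key

end PerfectCodeAux

theorem sylow_two_perfectCode_of_perfectCode {G : Type*} [Group G] [Finite G]
    (H : Subgroup G) (hH : IsPerfectCode H) :
    ∀ Q : Subgroup G, Q ≤ H → IsPGroup 2 Q → Odd (Q.relIndex H) →
      IsPerfectCode Q := by
  intro Q hQH h2 hodd
  exact PerfectCodeAux.constr Q h2 (PerfectCodeAux.key_lemma H Q hH hQH h2 hodd)
end

section
/- Let G be a finite group. Then every subgroup of G is a perfect code of G if and only if the Sylow 2-subgroups of G are elementary abelian (equivalently, G contains no element of order 4). -/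
open Function DoubleCoset Pointwise

section Fibers
variable {X Y : Type*} [Finite X] (f : X → Y)

theorem exists_bijOn_fiber_Iio_natCard :
    ∃ k : X → ℕ, ∀ y, Set.BijOn k {x | f x = y} (Set.Iio (Nat.card {x // f x = y})) := by
  let e : ∀ y, {x // f x = y} ≃ Fin (Nat.card {x // f x = y}) := fun y => Finite.equivFin _
  refine ⟨fun x => e (f x) ⟨x, rfl⟩, fun y => ?_⟩
  have he : ∀ z : {x // f x = y}, (e (f z) ⟨z, rfl⟩ : ℕ) = e y z := by
    rintro ⟨x, rfl⟩
    rfl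
  refine ⟨fun x hx => ?_, fun x hx x' hx' hxx' => ?_, fun n hn => ?_⟩
  · exact (he ⟨x, hx⟩).trans_lt (e y _).2
  · exact congrArg Subtype.val
      ((e y).injective (Fin.ext (((he ⟨x, hx⟩).symm.trans hxx').trans (he ⟨x', hx'⟩))))
  · obtain ⟨z, hz⟩ := (e y).surjective ⟨n, hn⟩
    exact ⟨z, z.2, (he z).trans (congrArg Fin.val hz)⟩

theorem exists_involutive_semiconj {ι : Y → Y} (hι : Involutive ι)
    (hcard : ∀ x, Nat.card {x' // f x' = ι (f x)} = Nat.card {x' // f x' = f x}) :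
    ∃ σ : X → X, Involutive σ ∧ Semiconj f σ ι := by
  obtain ⟨k, hk⟩ := exists_bijOn_fiber_Iio_natCard f
  have hmatch : ∀ x, ∃ x', f x' = ι (f x) ∧ k x' = k x := fun x =>
    (hk (ι (f x))).surjOn (by rw [Set.mem_Iio, hcard]; exact (hk (f x)).mapsTo rfl)
  choose σ hσf hσk using hmatch
  refine ⟨σ, fun x => (hk (f x)).injOn ?_ rfl ?_, hσf⟩
  · show f (σ (σ x)) = f x
    rw [hσf, hσf, hι]
  · rw [hσk, hσk]

end Fibers

theorem exists_section_inv_eq_comp {X G : Type*} [InvolutiveInv G] (π : G → X) {σ : X → X}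
    (hσ : Involutive σ)
    (hp : ∀ x, ∃ g, π g = x ∧ π g⁻¹ = σ x ∧ (σ x = x → g⁻¹ = g)) :
    ∃ r : X → G, (∀ x, π (r x) = x) ∧ ∀ x, (r x)⁻¹ = r (σ x) := by
  choose p hpx hpσ hpfix using hp
  -- `m x` is a point of the orbit `{x, σ x}` that depends only on the orbit
  let m : X → X := fun x => @Classical.epsilon X ⟨x⟩ (fun y => y = x ∨ y = σ x)
  have hm : ∀ x, m x = x ∨ m x = σ x := fun x =>
    @Classical.epsilon_spec X (fun y => y = x ∨ y = σ x) ⟨x, .inl rfl⟩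
  have hmσ : ∀ x, m (σ x) = m x := fun x => by
    simp only [m, hσ x, or_comm]
  classical
  refine ⟨fun x => if m x = x then p x else (p (σ x))⁻¹, fun x => ?_, fun x => ?_⟩
  · dsimp only
    split_ifs
    · exact hpx x
    · rw [hpσ, hσ]
  · dsimp only
    rw [hmσ, hσ x]
    by_cases hx : m x = x
    · by_cases hfix : σ x = x
      · simp [hx, hfix, hpfix x hfix]
      · simp [hx, Ne.symm hfix]
    · have hmx : m x = σ x := (hm x).resolve_left hx
      have hfix : σ x ≠ x := fun h => hx (hmx.trans h)
      simp [hmx, hfix]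

section Group

variable {G : Type*} [Group G]

theorem not_isPerfectCode_zpowers_sq {x : G} (hx : orderOf x = 4) :
    ¬ IsPerfectCode (Subgroup.zpowers (x ^ 2)) := by
  rintro ⟨T, hT, huniq⟩
  obtain ⟨t, ⟨htT, htx⟩, htuniq⟩ := huniq x
  obtain ⟨k, hk⟩ := Subgroup.mem_zpowers_iff.mp htx
  have ht : t = x ^ (1 - 2 * k) := by
    rw [zpow_sub, zpow_one, zpow_mul, zpow_ofNat, hk]
    group
  subst ht
  have hinv : (x ^ (1 - 2 * k))⁻¹ = x ^ (1 - 2 * k) := by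
    refine htuniq _ ⟨hT ▸ Set.inv_mem_inv.mpr htT, Subgroup.mem_zpowers_iff.mpr ⟨1 - k, ?_⟩⟩
    rw [inv_inv, ← zpow_ofNat, ← zpow_mul, ← zpow_add_one]
    ring_nf
  have hdvd : ((4 : ℕ) : ℤ) ∣ 2 * (1 - 2 * k) := by
    rw [← hx, orderOf_dvd_iff_zpow_eq_one, zpow_mul', zpow_two]
    nth_rewrite 1 [← hinv]
    exact inv_mul_cancel _
  omega

theorem DoubleCoset.inv_doubleCoset (a : G) (H K : Subgroup G) :
    (doubleCoset a H K)⁻¹ = doubleCoset a⁻¹ K H := by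
  ext g
  simp only [Set.mem_inv, mem_doubleCoset]
  constructor
  · rintro ⟨h, hh, k, hk, hg⟩
    exact ⟨k⁻¹, K.inv_mem hk, h⁻¹, H.inv_mem hh, by rw [← inv_inv g, hg]; group⟩
  · rintro ⟨k, hk, h, hh, rfl⟩
    exact ⟨h⁻¹, H.inv_mem hh, k⁻¹, K.inv_mem hk, by group⟩

theorem exists_pow_two_mul_add_one_sq_eq_one {g : G} (hg : ¬ 4 ∣ orderOf g) :
    ∃ k : ℕ, (g ^ (2 * k + 1)) ^ 2 = 1 := by
  have hk : ∃ k, orderOf g ∣ 4 * k + 2 := by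
    obtain ⟨m, hm | hm⟩ := Nat.even_or_odd' (orderOf g)
    · obtain ⟨j, rfl⟩ : Odd m := Nat.odd_iff.mpr (by omega)
      exact ⟨j, hm ▸ ⟨1, by ring⟩⟩
    · exact ⟨m, hm ▸ ⟨2, by ring⟩⟩
  obtain ⟨k, hk⟩ := hk
  exact ⟨k, by rw [← pow_mul, orderOf_dvd_iff_pow_eq_one.mp (by convert hk using 1; ring)]⟩

variable {H : Subgroup G}

theorem exists_mk_eq_inv_eq_self {t : G} (ht4 : ¬ 4 ∣ orderOf t)
    (ht : ((t⁻¹ : G) : G ⧸ H) = t) : ∃ s : G, (s : G ⧸ H) = t ∧ s⁻¹ = s := by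
  obtain ⟨k, hk⟩ := exists_pow_two_mul_add_one_sq_eq_one ht4
  have hsq : t ^ 2 ∈ H := by simpa [sq] using QuotientGroup.eq.mp ht
  refine ⟨t ^ (2 * k + 1), ?_, inv_eq_of_mul_eq_one_right (by rwa [← sq])⟩
  rw [pow_succ', pow_mul, QuotientGroup.mk_mul_of_mem _ (H.pow_mem hsq k)]

theorem doubleCoset_out_mk (g : G) : doubleCoset (g : G ⧸ H).out H H = doubleCoset g H H := by
  refine doubleCoset_eq_of_mem
    (mem_doubleCoset.mpr ⟨1, H.one_mem, g⁻¹ * (g : G ⧸ H).out, ?_, by group⟩)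
  exact QuotientGroup.eq.mp (QuotientGroup.out_eq' _).symm

theorem natCard_doubleCoset (g : G) : Nat.card (doubleCoset g H H) =
    Nat.card H * Nat.card {C : G ⧸ H // doubleCoset C.out H H = doubleCoset g H H} := by
  have hpre : QuotientGroup.mk ⁻¹' {C : G ⧸ H | doubleCoset C.out H H = doubleCoset g H H} =
      doubleCoset g H H := by
    ext x
    simp only [Set.mem_preimage, Set.mem_ofPred_eq, doubleCoset_out_mk]
    exact ⟨fun h => h ▸ mem_doubleCoset_self H H x, doubleCoset_eq_of_mem⟩
  have h := QuotientGroup.card_preimage_mk H {C | doubleCoset C.out H H = doubleCoset g H H}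
  rwa [hpre] at h

theorem natCard_fiber_doubleCoset_inv [Finite H] (g : G) :
    Nat.card {C : G ⧸ H // doubleCoset C.out H H = doubleCoset g⁻¹ H H} =
      Nat.card {C : G ⧸ H // doubleCoset C.out H H = doubleCoset g H H} := by
  refine Nat.eq_of_mul_eq_mul_left (Nat.card_pos (α := H)) ?_
  rw [← natCard_doubleCoset, ← natCard_doubleCoset, ← inv_doubleCoset, Set.natCard_inv]

theorem exists_mk_eq_mk_inv_eq {C D : G ⧸ H}
    (h : doubleCoset D.out H H = (doubleCoset C.out H H)⁻¹) :
    ∃ t : G, (t : G ⧸ H) = C ∧ ((t⁻¹ : G) : G ⧸ H) = D := by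
  rw [inv_doubleCoset] at h
  obtain ⟨a, ha, b, hb, hab⟩ := mem_doubleCoset.mp (h ▸ mem_doubleCoset_self H H D.out)
  refine ⟨C.out * a⁻¹, ?_, ?_⟩
  · rw [QuotientGroup.mk_mul_of_mem _ (H.inv_mem ha), QuotientGroup.out_eq']
  · rw [show (C.out * a⁻¹)⁻¹ = D.out * b⁻¹ by rw [hab]; group,
      QuotientGroup.mk_mul_of_mem _ (H.inv_mem hb), QuotientGroup.out_eq']

theorem isPerfectCode_of_section {r : G ⧸ H → G} (hr : ∀ C, (r C : G ⧸ H) = C)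
    (hinv : ∀ C, ∃ D, (r C)⁻¹ = r D) : IsPerfectCode H := by
  refine ⟨Set.range r, ?_, fun g => ⟨r g, ⟨⟨g, rfl⟩, QuotientGroup.eq.mp (hr g)⟩, ?_⟩⟩
  · ext g
    simp only [Set.mem_inv, Set.mem_range]
    constructor
    · rintro ⟨C, hC⟩
      obtain ⟨D, hD⟩ := hinv C
      exact ⟨D, by rw [← hD, hC, inv_inv]⟩
    · rintro ⟨C, rfl⟩
      exact (hinv C).imp fun D hD => hD.symm
  · rintro _ ⟨⟨C, rfl⟩, hC⟩
    rw [← (hr C).symm.trans (QuotientGroup.eq.mpr hC)]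

theorem isPerfectCode_of_forall_orderOf_ne_four [Finite G] (h4 : ∀ x : G, orderOf x ≠ 4)
    (H : Subgroup G) : IsPerfectCode H := by
  obtain ⟨σ, hσ, hσf⟩ := exists_involutive_semiconj (fun C : G ⧸ H => doubleCoset C.out H H)
    inv_involutive fun C => by
      simpa only [inv_doubleCoset] using natCard_fiber_doubleCoset_inv C.out
  have hrep : ∀ C : G ⧸ H, ∃ t : G,
      (t : G ⧸ H) = C ∧ ((t⁻¹ : G) : G ⧸ H) = σ C ∧ (σ C = C → t⁻¹ = t) := by
    intro C
    obtain ⟨t, htC, htσ⟩ := exists_mk_eq_mk_inv_eq (hσf C)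
    by_cases hfix : σ C = C
    · have ht4 : ¬ 4 ∣ orderOf t := fun h => h4 _ (orderOf_pow_orderOf_div (orderOf_pos t).ne' h)
      obtain ⟨s, hs, hsinv⟩ := exists_mk_eq_inv_eq_self ht4 (htσ.trans (hfix.trans htC.symm))
      exact ⟨s, hs.trans htC, by rw [hsinv, hs, htC, hfix], fun _ => hsinv⟩
    · exact ⟨t, htC, htσ, (absurd · hfix)⟩
  obtain ⟨r, hr, hrσ⟩ := exists_section_inv_eq_comp QuotientGroup.mk hσ hrep
  exact isPerfectCode_of_section hr fun C => ⟨σ C, hrσ C⟩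

end Group

theorem forall_perfectCode_iff_no_order_four {G : Type*} [Group G] [Finite G] :
    (∀ H : Subgroup G, IsPerfectCode H) ↔ ∀ x : G, orderOf x ≠ 4 :=
  ⟨fun h _ hx => not_isPerfectCode_zpowers_sq hx (h _), isPerfectCode_of_forall_orderOf_ne_four⟩
end

section
/- Let G be a finite group containing an element z of order 4. Then the cyclic subgroup ⟨z²⟩ generated by z² is not a perfect code of G. -/
/-! If every element of the coset `gH` squares into `H`, let `t` be the representative of `gH` in an
inverse-closed transversal `T`. Then `t⁻¹ ∈ T` represents `gH` as well, since `tg = t² · t⁻¹g ∈ H`;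
so `t⁻¹ = t` and `gH` contains an element of order at most two. For `H = ⟨z²⟩` and `g = z` every
element of `zH` squares to `z² ≠ 1`. -/

namespace IsPerfectCode

variable {G : Type*} [Group G] {H : Subgroup G}

theorem exists_mul_sq_eq_one (hH : IsPerfectCode H) {g : G}
    (hg : ∀ h ∈ H, (g * h) ^ 2 ∈ H) : ∃ h ∈ H, (g * h) ^ 2 = 1 := by
  obtain ⟨T, hT_inv, hT⟩ := hH
  obtain ⟨t, ⟨htT, htg⟩, huniq⟩ := hT g
  have hgt : g * (t⁻¹ * g)⁻¹ = t := by group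
  have ht_sq : t * t ∈ H := by
    simpa only [hgt, sq] using hg _ (inv_mem htg)
  have ht_inv : t⁻¹ = t := by
    refine huniq t⁻¹ ⟨?_, ?_⟩
    · rwa [← hT_inv, Set.inv_mem_inv]
    · rw [inv_inv, show t * g = t * t * (t⁻¹ * g) by group]
      exact mul_mem ht_sq htg
  refine ⟨(t⁻¹ * g)⁻¹, inv_mem htg, ?_⟩
  rw [hgt, sq]
  nth_rewrite 1 [← ht_inv]
  exact inv_mul_cancel t

end IsPerfectCode

theorem mul_sq_eq_sq_of_mem_zpowers_sq {G : Type*} [Group G] {z h : G} (hz : z ^ 4 = 1)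
    (hh : h ∈ Subgroup.zpowers (z ^ 2)) : (z * h) ^ 2 = z ^ 2 := by
  obtain ⟨k, rfl⟩ := hh
  calc (z * (z ^ 2) ^ k) ^ 2 = z ^ 2 * (z ^ 4) ^ k := by group
    _ = z ^ 2 := by rw [hz, one_zpow, mul_one]

theorem not_perfectCode_zpowers_sq_of_order_four_general {G : Type*} [Group G]
    (z : G) (hz : orderOf z = 4) :
    ¬ IsPerfectCode (Subgroup.zpowers (z ^ 2)) := by
  intro hH
  have hz4 : z ^ 4 = 1 := hz ▸ pow_orderOf_eq_one z
  obtain ⟨h, hh, hsq⟩ := hH.exists_mul_sq_eq_one fun h hh => by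
    rw [mul_sq_eq_sq_of_mem_zpowers_sq hz4 hh]
    exact Subgroup.mem_zpowers _
  rw [mul_sq_eq_sq_of_mem_zpowers_sq hz4 hh] at hsq
  have h4_dvd_2 : 4 ∣ 2 := hz ▸ orderOf_dvd_of_pow_eq_one hsq
  norm_num at h4_dvd_2

theorem not_perfectCode_zpowers_sq_of_order_four {G : Type*} [Group G] [Finite G]
    (z : G) (hz : orderOf z = 4) :
    ¬ IsPerfectCode (Subgroup.zpowers (z ^ 2)) :=
  not_perfectCode_zpowers_sq_of_order_four_general z hz
end
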